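/- arXiv:1911.06926 — 3 statements merged into one kernel-verified Lean document; each statement's English description precedes it below -/
import Mathlib

section
/- Let $\mu,\varepsilon>0$ and $x_0<x_1$. Suppose $\psi\in C^2([x_0,x_1])$ satisfies $\psi''(x)-\frac{\mu^2}{\varepsilon^2}\psi(x)\geq 0$ on $(x_0,x_1)$, $\psi\geq 0$, $\psi(x_0)=\psi_0$ and $\psi'(x_1)=0$. Then $\psi(x_1)\leq 2\psi_0\exp(-\mu(x_1-x_0)/\varepsilon)$. -/
open MeasureTheory Set

/-- Maximum-principle comparison: if `ψ ∈ C²([x₀,x₁])` satisfies `ψ'' - (μ/ε)²ψ ≥ 0`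
on `(x₀,x₁)`, `ψ ≥ 0`, `ψ(x₀) = ψ₀` and `ψ'(x₁) = 0`, then
`ψ(x₁) ≤ 2ψ₀ exp(-μ(x₁-x₀)/ε)`. -/
theorem stmt5
    (μ ε x₀ x₁ ψ₀ : ℝ) (hμ : 0 < μ) (hε : 0 < ε) (hx : x₀ < x₁)
    (ψ ψ' ψ'' : ℝ → ℝ)
    (hd1 : ∀ x ∈ Set.Icc x₀ x₁, HasDerivAt ψ (ψ' x) x)
    (hd2 : ∀ x ∈ Set.Icc x₀ x₁, HasDerivAt ψ' (ψ'' x) x)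
    (hineq : ∀ x ∈ Set.Ioo x₀ x₁, 0 ≤ ψ'' x - μ ^ 2 / ε ^ 2 * ψ x)
    (hnn : ∀ x ∈ Set.Icc x₀ x₁, 0 ≤ ψ x)
    (hψ₀ : ψ x₀ = ψ₀) (hN : ψ' x₁ = 0) :
    ψ x₁ ≤ 2 * ψ₀ * Real.exp (-(μ * (x₁ - x₀)) / ε) := by
  have hx₀ : x₀ ∈ Set.Icc x₀ x₁ := ⟨le_refl _, hx.le⟩
  have hx₁ : x₁ ∈ Set.Icc x₀ x₁ := ⟨hx.le, le_refl _⟩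
  have hψ₀nn : 0 ≤ ψ₀ := hψ₀ ▸ hnn x₀ hx₀
  set k := μ / ε with hk
  have hkpos : 0 < k := div_pos hμ hε
  set c : ℝ → ℝ := fun x => Real.cosh (k * (x - x₁)) with hc
  set s : ℝ → ℝ := fun x => Real.sinh (k * (x - x₁)) with hs
  have hcpos : ∀ x, 0 < c x := fun x => Real.cosh_pos _
  have hlin : ∀ x : ℝ, HasDerivAt (fun y => k * (y - x₁)) k x := by
    intro x
    simpa using ((hasDerivAt_id x).sub_const x₁).const_mul k
  have hcd : ∀ x, HasDerivAt c (k * s x) x := by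
    intro x
    have := (Real.hasDerivAt_cosh (k * (x - x₁))).comp x (hlin x)
    exact this.congr_deriv (by simp [hs, mul_comm])
  have hsd : ∀ x, HasDerivAt s (k * c x) x := by
    intro x
    have := (Real.hasDerivAt_sinh (k * (x - x₁))).comp x (hlin x)
    exact this.congr_deriv (by simp [hc, mul_comm])
  -- u = ψ' c - k ψ s, u' = (ψ'' - k² ψ) c ≥ 0
  set u : ℝ → ℝ := fun x => ψ' x * c x - k * ψ x * s x with hu
  have hud : ∀ x ∈ Set.Icc x₀ x₁,
      HasDerivAt u ((ψ'' x - k ^ 2 * ψ x) * c x) x := by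
    intro x hxm
    have h := ((hd2 x hxm).mul (hcd x)).sub
      (((hd1 x hxm).const_mul k).mul (hsd x))
    have hid : Real.cosh (k * (x - x₁)) ^ 2 - Real.sinh (k * (x - x₁)) ^ 2 = 1 :=
      Real.cosh_sq_sub_sinh_sq _
    refine h.congr_deriv ?_
    ring
  have hk2 : k ^ 2 = μ ^ 2 / ε ^ 2 := by
    rw [hk]; rw [div_pow]
  have humono : MonotoneOn u (Set.Icc x₀ x₁) := by
    apply monotoneOn_of_hasDerivWithinAt_nonneg (convex_Icc x₀ x₁)
      (fun x hxm => (hud x hxm).continuousAt.continuousWithinAt)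
      (f' := fun x => (ψ'' x - k ^ 2 * ψ x) * c x)
    · intro x hxm
      rw [interior_Icc] at hxm
      exact (hud x (Set.Ioo_subset_Icc_self hxm)).hasDerivWithinAt
    · intro x hxm
      rw [interior_Icc] at hxm
      have := hineq x hxm
      rw [← hk2] at this
      exact mul_nonneg (by linarith) (hcpos x).le
  have hux₁ : u x₁ = 0 := by
    simp [hu, hc, hs, hN]
  have hule : ∀ x ∈ Set.Icc x₀ x₁, u x ≤ 0 := fun x hxm =>
    hux₁ ▸ humono hxm hx₁ hxm.2
  -- v = ψ / c is antitone
  set v : ℝ → ℝ := fun x => ψ x / c x with hv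
  have hvd : ∀ x ∈ Set.Icc x₀ x₁,
      HasDerivAt v (u x / (c x) ^ 2) x := by
    intro x hxm
    have h := (hd1 x hxm).div (hcd x) (hcpos x).ne'
    refine h.congr_deriv ?_
    rw [hu]
    ring
  have hvanti : AntitoneOn v (Set.Icc x₀ x₁) := by
    apply antitoneOn_of_hasDerivWithinAt_nonpos (convex_Icc x₀ x₁)
      (fun x hxm => (hvd x hxm).continuousAt.continuousWithinAt)
      (f' := fun x => u x / (c x) ^ 2)
    · intro x hxm
      rw [interior_Icc] at hxm
      exact (hvd x (Set.Ioo_subset_Icc_self hxm)).hasDerivWithinAt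
    · intro x hxm
      rw [interior_Icc] at hxm
      exact div_nonpos_of_nonpos_of_nonneg
        (hule x (Set.Ioo_subset_Icc_self hxm)) (by positivity)
  have hkey : ψ x₁ ≤ ψ₀ / Real.cosh (k * (x₁ - x₀)) := by
    have h := hvanti hx₀ hx₁ hx.le
    have hc₁ : c x₁ = 1 := by simp [hc]
    have hc₀ : c x₀ = Real.cosh (k * (x₁ - x₀)) := by
      show Real.cosh (k * (x₀ - x₁)) = _
      have : k * (x₀ - x₁) = -(k * (x₁ - x₀)) := by ring
      rw [this, Real.cosh_neg]
    rw [hv] at h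
    simp only [hc₁, div_one, hc₀, hψ₀] at h
    exact h
  -- cosh t ≥ e^t / 2
  have hfin : ψ₀ / Real.cosh (k * (x₁ - x₀)) ≤
      2 * ψ₀ * Real.exp (-(μ * (x₁ - x₀)) / ε) := by
    set t := k * (x₁ - x₀) with ht
    have hexp : Real.exp (-(μ * (x₁ - x₀)) / ε) = Real.exp (-t) := by
      congr 1
      rw [ht, hk]
      field_simp
    rw [hexp]
    rw [div_le_iff₀ (Real.cosh_pos _)]
    have hcosh : Real.cosh t = (Real.exp t + Real.exp (-t)) / 2 := Real.cosh_eq t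
    have h1 : Real.exp (-t) * Real.exp t = 1 := by
      rw [← Real.exp_add]; simp
    have h2 : 0 < Real.exp (-t) := Real.exp_pos _
    have key : 2 * ψ₀ * Real.exp (-t) * Real.cosh t = ψ₀ * (1 + Real.exp (-t) ^ 2) := by
      rw [hcosh]
      linear_combination ψ₀ * h1
    nlinarith [mul_nonneg hψ₀nn (sq_nonneg (Real.exp (-t)))]
  linarith
end

section
/- Let $D\in C^2$, $f\in C^2$ satisfy $D\geq d>0$, $f(\alpha)=f(\beta)=0$, $f'(\alpha),f'(\beta)>0$, $\int_\alpha^\beta fD=0$ and $G(u)=\int_\alpha^u fD>0$ for $u\neq\alpha,\beta$ in $[\alpha,\beta]$. Then for each $\varepsilon>0$ there exists a unique strictly increasing solution $\Phi_\varepsilon:\mathbb{R}\to(\alpha,\beta)$ of the first-order problem $\varepsilon D(\Phi_\varepsilon)\Phi_\varepsilon'=\sqrt{2G(\Phi_\varepsilon)}$, $\Phi_\varepsilon(0)=\frac{\alpha+\beta}{2}$, implicitly defined by $\int_{(\alpha+\beta)/2}^{\Phi_\varepsilon(x)}\frac{D(s)}{\sqrt{2G(s)}}\,ds=\frac{x}{\varepsilon}$,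 and it satisfies $\lim_{x\to-\infty}\Phi_\varepsilon(x)=\alpha$, $\lim_{x\to+\infty}\Phi_\varepsilon(x)=\beta$. -/
open MeasureTheory Set Filter

set_option maxHeartbeats 2000000 in
/-- Existence and uniqueness of the strictly increasing standing-wave profile
`Φ_ε` solving `ε D(Φ)Φ' = √(2G(Φ))`, `Φ(0) = (α+β)/2`, implicitly given by
`∫_{(α+β)/2}^{Φ(x)} D(s)/√(2G(s)) ds = x/ε`, with limits `α` at `-∞` and `β` at `+∞`. -/
theorem stmt9
    (I : Set ℝ) (hIopen : IsOpen I) (hIconn : I.OrdConnected)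
    (D f G : ℝ → ℝ) (d α β ε : ℝ)
    (hαβ : α < β) (hsub : Set.Icc α β ⊆ I) (hε : 0 < ε)
    (hD : ContDiffOn ℝ 2 D I) (hd : 0 < d) (hDd : ∀ u ∈ I, d ≤ D u)
    (hf : ContDiffOn ℝ 2 f I)
    (hfα : f α = 0) (hfβ : f β = 0)
    (hf'α : 0 < deriv f α) (hf'β : 0 < deriv f β)
    (hint0 : (∫ s in α..β, f s * D s) = 0)
    (hG : ∀ u, G u = ∫ s in α..u, f s * D s)
    (hGpos : ∀ u ∈ Set.Icc α β, u ≠ α → u ≠ β → 0 < G u) :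
    ∃ Φ : ℝ → ℝ,
      (StrictMono Φ ∧
       (∀ x, Φ x ∈ Set.Ioo α β) ∧
       (∀ x, HasDerivAt Φ (Real.sqrt (2 * G (Φ x)) / (ε * D (Φ x))) x) ∧
       Φ 0 = (α + β) / 2 ∧
       (∀ x, (∫ s in ((α + β) / 2)..(Φ x), D s / Real.sqrt (2 * G s)) = x / ε) ∧
       Tendsto Φ atBot (nhds α) ∧ Tendsto Φ atTop (nhds β)) ∧
      ∀ Ψ : ℝ → ℝ, StrictMono Ψ → (∀ x, Ψ x ∈ Set.Ioo α β) →
        (∀ x, HasDerivAt Ψ (Real.sqrt (2 * G (Ψ x)) / (ε * D (Ψ x))) x) →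
        Ψ 0 = (α + β) / 2 → Ψ = Φ := by
  set m : ℝ := (α + β) / 2 with hm
  have hαm : α < m := by rw [hm]; linarith
  have hmβ : m < β := by rw [hm]; linarith
  have hmIoo : m ∈ Set.Ioo α β := ⟨hαm, hmβ⟩
  have hIooI : Set.Ioo α β ⊆ I := fun u hu => hsub (Set.Ioo_subset_Icc_self hu)
  set fD : ℝ → ℝ := fun s => f s * D s with hfDdef
  have hfDcd : ContDiffOn ℝ 2 fD I := hf.mul hD
  have hfDdiff : ∀ u ∈ I, DifferentiableAt ℝ fD u := fun u hu =>
    (hfDcd.contDiffAt (hIopen.mem_nhds hu)).differentiableAt (by norm_num)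
  have hfDcont : ContinuousOn fD I := hfDcd.continuousOn
  -- basic facts about G
  have hGα : G α = 0 := by rw [hG]; simp
  have hGβ : G β = 0 := by rw [hG]; exact hint0
  have hGIoo : ∀ u ∈ Set.Ioo α β, 0 < G u := fun u hu =>
    hGpos u (Set.Ioo_subset_Icc_self hu) (ne_of_gt hu.1) (ne_of_lt hu.2)
  have hIccuIcc : ∀ u ∈ Set.Icc α β, ∀ v ∈ Set.Icc α β, Set.uIcc u v ⊆ Set.Icc α β :=
    fun u hu v hv => Set.ordConnected_Icc.uIcc_subset hu hv
  have hfD_int : ∀ u ∈ Set.Icc α β, ∀ v ∈ Set.Icc α β, IntervalIntegrable fD volume u v :=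
    fun u hu v hv => ((hfDcont.mono hsub).mono (hIccuIcc u hu v hv)).intervalIntegrable
  have hGderiv : ∀ u ∈ Set.Ioo α β, HasDerivAt G (fD u) u := by
    intro u hu
    have hu' : u ∈ I := hIooI hu
    have heq : G = fun w => ∫ s in α..w, fD s := funext hG
    rw [heq]
    exact intervalIntegral.integral_hasDerivAt_right
      (hfD_int α (Set.left_mem_Icc.2 hαβ.le) u (Set.Ioo_subset_Icc_self hu))
      (hfDcont.stronglyMeasurableAtFilter hIopen u hu')
      (hfDcont.continuousAt (hIopen.mem_nhds hu'))
  -- the integrand g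
  set g : ℝ → ℝ := fun s => D s / Real.sqrt (2 * G s) with hgdef
  have hsqrtpos : ∀ u ∈ Set.Ioo α β, 0 < Real.sqrt (2 * G u) := fun u hu =>
    Real.sqrt_pos.2 (by have := hGIoo u hu; linarith)
  have hgpos : ∀ u ∈ Set.Ioo α β, 0 < g u := fun u hu =>
    div_pos (lt_of_lt_of_le hd (hDd u (hIooI hu))) (hsqrtpos u hu)
  have hgcont : ContinuousOn g (Set.Ioo α β) := by
    intro u hu
    have hu' : u ∈ I := hIooI hu
    have hDu : ContinuousAt D u := (hD.continuousOn.continuousAt (hIopen.mem_nhds hu'))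
    have hGu : ContinuousAt G u := (hGderiv u hu).continuousAt
    exact (hDu.div ((Real.continuous_sqrt.continuousAt).comp
      ((continuousAt_const.mul hGu))) (ne_of_gt (hsqrtpos u hu))).continuousWithinAt
  have hIoouIcc : ∀ u ∈ Set.Ioo α β, ∀ v ∈ Set.Ioo α β, Set.uIcc u v ⊆ Set.Ioo α β :=
    fun u hu v hv => Set.ordConnected_Ioo.uIcc_subset hu hv
  have hg_int : ∀ u ∈ Set.Ioo α β, ∀ v ∈ Set.Ioo α β, IntervalIntegrable g volume u v :=
    fun u hu v hv => (hgcont.mono (hIoouIcc u hu v hv)).intervalIntegrable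
  -- the primitive h
  set h : ℝ → ℝ := fun u => ∫ s in m..u, g s with hhdef
  have hhderiv : ∀ u ∈ Set.Ioo α β, HasDerivAt h (g u) u := by
    intro u hu
    exact intervalIntegral.integral_hasDerivAt_right
      (hg_int m hmIoo u hu)
      (hgcont.stronglyMeasurableAtFilter isOpen_Ioo u hu)
      (hgcont.continuousAt (isOpen_Ioo.mem_nhds hu))
  have hhcont : ContinuousOn h (Set.Ioo α β) := fun u hu =>
    ((hhderiv u hu).continuousAt).continuousWithinAt
  have hhmono : StrictMonoOn h (Set.Ioo α β) := by
    apply strictMonoOn_of_deriv_pos (convex_Ioo α β) hhcont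
    intro u hu
    rw [interior_Ioo] at hu
    rw [(hhderiv u hu).deriv]
    exact hgpos u hu
  have hhm : h m = 0 := by rw [hhdef]; simp
  -- Lipschitz bound on fD
  obtain ⟨K, hK⟩ : ∃ K, ∀ s ∈ Set.Icc α β, ‖deriv fD s‖ ≤ K := by
    have hc : ContinuousOn (deriv fD) (Set.Icc α β) :=
      (hfDcd.continuousOn_deriv_of_isOpen hIopen (by norm_num)).mono hsub
    exact (isCompact_Icc.exists_bound_of_continuousOn hc)
  set L : ℝ := |K| + 1 with hLdef
  have hL : 0 < L := by positivity
  have hKL : ∀ s ∈ Set.Icc α β, ‖deriv fD s‖ ≤ L := fun s hs =>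
    le_trans (hK s hs) (by rw [hLdef]; have := le_abs_self K; linarith)
  have hfDdiff' : ∀ s ∈ Set.Icc α β, DifferentiableAt ℝ fD s := fun s hs => hfDdiff s (hsub hs)
  have hfDβ : fD β = 0 := by simp [hfDdef, hfβ]
  have hfDα : fD α = 0 := by simp [hfDdef, hfα]
  have hlipβ : ∀ s ∈ Set.Icc α β, |fD s| ≤ L * (β - s) := by
    intro s hs
    have := Convex.norm_image_sub_le_of_norm_deriv_le hfDdiff' hKL (convex_Icc α β)
      (Set.right_mem_Icc.2 hαβ.le) hs
    rw [hfDβ] at this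
    simpa [abs_of_nonneg (sub_nonneg.2 hs.2), Real.norm_eq_abs, abs_sub_comm s β] using this
  have hlipα : ∀ s ∈ Set.Icc α β, |fD s| ≤ L * (s - α) := by
    intro s hs
    have := Convex.norm_image_sub_le_of_norm_deriv_le hfDdiff' hKL (convex_Icc α β)
      (Set.left_mem_Icc.2 hαβ.le) hs
    rw [hfDα] at this
    simpa [abs_of_nonneg (sub_nonneg.2 hs.1), Real.norm_eq_abs] using this
  -- quadratic bounds on G
  have hGquadβ : ∀ s ∈ Set.Icc α β, G s ≤ L * (β - s) ^ 2 := by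
    intro s hs
    have hsplit : G s = -(∫ t in s..β, fD t) := by
      have := intervalIntegral.integral_add_adjacent_intervals
        (hfD_int α (Set.left_mem_Icc.2 hαβ.le) s hs)
        (hfD_int s hs β (Set.right_mem_Icc.2 hαβ.le))
      rw [hG s]
      have h0 : (∫ t in α..β, fD t) = 0 := hint0
      rw [h0] at this
      linarith
    have hbound : ‖∫ t in s..β, fD t‖ ≤ (L * (β - s)) * |β - s| := by
      apply intervalIntegral.norm_integral_le_of_norm_le_const
      intro x hx
      rw [Set.uIoc_of_le hs.2] at hx
      have hx' : x ∈ Set.Icc α β := ⟨le_trans hs.1 hx.1.le, hx.2⟩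
      calc ‖fD x‖ ≤ L * (β - x) := by
              have := hlipβ x hx'
              rwa [Real.norm_eq_abs]
        _ ≤ L * (β - s) := by nlinarith [hx.1]
    rw [hsplit]
    have h1 : |∫ t in s..β, fD t| ≤ L * (β - s) ^ 2 := by
      rw [← Real.norm_eq_abs]
      calc ‖∫ t in s..β, fD t‖ ≤ (L * (β - s)) * |β - s| := hbound
        _ = L * (β - s) ^ 2 := by rw [abs_of_nonneg (sub_nonneg.2 hs.2)]; ring
    have := neg_abs_le (∫ t in s..β, fD t)
    linarith [abs_le.1 h1]
  have hGquadα : ∀ s ∈ Set.Icc α β, G s ≤ L * (s - α) ^ 2 := by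
    intro s hs
    have hbound : ‖∫ t in α..s, fD t‖ ≤ (L * (s - α)) * |s - α| := by
      apply intervalIntegral.norm_integral_le_of_norm_le_const
      intro x hx
      rw [Set.uIoc_of_le hs.1] at hx
      have hx' : x ∈ Set.Icc α β := ⟨hx.1.le, le_trans hx.2 hs.2⟩
      calc ‖fD x‖ ≤ L * (x - α) := by
              have := hlipα x hx'
              rwa [Real.norm_eq_abs]
        _ ≤ L * (s - α) := by nlinarith [hx.2]
    rw [hG s]
    have h1 : |∫ t in α..s, fD t| ≤ L * (s - α) ^ 2 := by
      rw [← Real.norm_eq_abs]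
      calc ‖∫ t in α..s, fD t‖ ≤ (L * (s - α)) * |s - α| := hbound
        _ = L * (s - α) ^ 2 := by rw [abs_of_nonneg (sub_nonneg.2 hs.1)]; ring
    linarith [abs_le.1 h1]
  -- lower bound on g near the endpoints
  set c : ℝ := d / Real.sqrt (2 * L) with hcdef
  have hsqrt2L : 0 < Real.sqrt (2 * L) := Real.sqrt_pos.2 (by linarith)
  have hc : 0 < c := div_pos hd hsqrt2L
  have hgβ : ∀ s ∈ Set.Ioo α β, c * (β - s)⁻¹ ≤ g s := by
    intro s hs
    have hβs : 0 < β - s := by linarith [hs.2]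
    have hsq : Real.sqrt (2 * G s) ≤ Real.sqrt (2 * L) * (β - s) := by
      calc Real.sqrt (2 * G s) ≤ Real.sqrt (2 * (L * (β - s) ^ 2)) :=
            Real.sqrt_le_sqrt (by nlinarith [hGquadβ s (Set.Ioo_subset_Icc_self hs)])
        _ = Real.sqrt (2 * L) * (β - s) := by
            rw [show 2 * (L * (β - s) ^ 2) = (2 * L) * (β - s) ^ 2 by ring,
              Real.sqrt_mul (by linarith : (0:ℝ) ≤ 2 * L), Real.sqrt_sq hβs.le]
    have : d / (Real.sqrt (2 * L) * (β - s)) ≤ D s / Real.sqrt (2 * G s) :=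
      div_le_div₀ (le_trans hd.le (hDd s (hIooI hs))) (hDd s (hIooI hs))
        (hsqrtpos s hs) hsq
    calc c * (β - s)⁻¹ = d / (Real.sqrt (2 * L) * (β - s)) := by
          rw [hcdef]; field_simp
      _ ≤ g s := this
  have hgα : ∀ s ∈ Set.Ioo α β, c * (s - α)⁻¹ ≤ g s := by
    intro s hs
    have hsα : 0 < s - α := by linarith [hs.1]
    have hsq : Real.sqrt (2 * G s) ≤ Real.sqrt (2 * L) * (s - α) := by
      calc Real.sqrt (2 * G s) ≤ Real.sqrt (2 * (L * (s - α) ^ 2)) :=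
            Real.sqrt_le_sqrt (by nlinarith [hGquadα s (Set.Ioo_subset_Icc_self hs)])
        _ = Real.sqrt (2 * L) * (s - α) := by
            rw [show 2 * (L * (s - α) ^ 2) = (2 * L) * (s - α) ^ 2 by ring,
              Real.sqrt_mul (by linarith : (0:ℝ) ≤ 2 * L), Real.sqrt_sq hsα.le]
    have : d / (Real.sqrt (2 * L) * (s - α)) ≤ D s / Real.sqrt (2 * G s) :=
      div_le_div₀ (le_trans hd.le (hDd s (hIooI hs))) (hDd s (hIooI hs))
        (hsqrtpos s hs) hsq
    calc c * (s - α)⁻¹ = d / (Real.sqrt (2 * L) * (s - α)) := by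
          rw [hcdef]; field_simp
      _ ≤ g s := this
  -- logarithmic integrals
  have hlogβ : ∀ u v : ℝ, α < u → u ≤ v → v < β →
      (∫ s in u..v, (β - s)⁻¹) = Real.log (β - u) - Real.log (β - v) := by
    intro u v hu huv hv
    have key : ∀ s ∈ Set.uIcc u v, HasDerivAt (fun s => -Real.log (β - s)) ((β - s)⁻¹) s := by
      intro s hs
      rw [Set.uIcc_of_le huv] at hs
      have hβs : 0 < β - s := by linarith [hs.2]
      have h1 : HasDerivAt (fun s : ℝ => β - s) (-1) s := (hasDerivAt_id s).const_sub β
      have h2 := (Real.hasDerivAt_log (ne_of_gt hβs)).comp s h1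
      have h3 := h2.neg
      refine h3.congr_deriv (Eq.symm ?_)
      field_simp
    have hint : IntervalIntegrable (fun s => (β - s)⁻¹) volume u v := by
      apply ContinuousOn.intervalIntegrable
      apply ContinuousOn.inv₀ ((continuous_const.sub continuous_id).continuousOn)
      intro s hs
      rw [Set.uIcc_of_le huv] at hs
      have : 0 < β - s := by linarith [hs.2]
      exact ne_of_gt this
    rw [intervalIntegral.integral_eq_sub_of_hasDerivAt key hint]
    ring
  have hlogα : ∀ u v : ℝ, α < u → u ≤ v → v < β →
      (∫ s in u..v, (s - α)⁻¹) = Real.log (v - α) - Real.log (u - α) := by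
    intro u v hu huv hv
    have key : ∀ s ∈ Set.uIcc u v, HasDerivAt (fun s => Real.log (s - α)) ((s - α)⁻¹) s := by
      intro s hs
      rw [Set.uIcc_of_le huv] at hs
      have hsα : 0 < s - α := by linarith [hs.1]
      have h1 : HasDerivAt (fun s : ℝ => s - α) 1 s := (hasDerivAt_id s).sub_const α
      have h2 := (Real.hasDerivAt_log (ne_of_gt hsα)).comp s h1
      refine h2.congr_deriv (Eq.symm ?_)
      field_simp
    have hint : IntervalIntegrable (fun s => (s - α)⁻¹) volume u v := by
      apply ContinuousOn.intervalIntegrable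
      apply ContinuousOn.inv₀ ((continuous_id.sub continuous_const).continuousOn)
      intro s hs
      rw [Set.uIcc_of_le huv] at hs
      have : 0 < s - α := by linarith [hs.1]
      exact ne_of_gt this
    rw [intervalIntegral.integral_eq_sub_of_hasDerivAt key hint]
  -- h is unbounded above
  have hub : ∀ M : ℝ, ∃ u ∈ Set.Ioo α β, M ≤ h u := by
    intro M
    set t : ℝ := min ((β - m) / 2) (Real.exp ((c * Real.log (β - m) - M) / c)) with htdef
    have ht0 : 0 < t := lt_min (by linarith) (Real.exp_pos _)
    set u : ℝ := β - t with hudef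
    have hmu : m ≤ u := by
      have : t ≤ (β - m) / 2 := min_le_left _ _
      rw [hudef]; linarith
    have huIoo : u ∈ Set.Ioo α β := ⟨lt_of_lt_of_le hαm hmu, by rw [hudef]; linarith⟩
    refine ⟨u, huIoo, ?_⟩
    have hmono : (∫ s in m..u, c * (β - s)⁻¹) ≤ h u := by
      apply intervalIntegral.integral_mono_on hmu
      · apply ContinuousOn.intervalIntegrable
        apply ContinuousOn.mul continuousOn_const
        apply ContinuousOn.inv₀ ((continuous_const.sub continuous_id).continuousOn)
        intro s hs
        rw [Set.uIcc_of_le hmu] at hs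
        have : s < β := lt_of_le_of_lt hs.2 huIoo.2
        have : 0 < β - s := by linarith
        exact ne_of_gt this
      · exact hg_int m hmIoo u huIoo
      · intro s hs
        exact hgβ s ⟨lt_of_lt_of_le hαm hs.1, lt_of_le_of_lt hs.2 huIoo.2⟩
    have hcomp : (∫ s in m..u, c * (β - s)⁻¹) = c * (Real.log (β - m) - Real.log t) := by
      rw [intervalIntegral.integral_const_mul, hlogβ m u hαm hmu huIoo.2]
      rw [hudef]; ring_nf
    have hlogt : c * Real.log t ≤ c * Real.log (β - m) - M := by
      have h1 : Real.log t ≤ (c * Real.log (β - m) - M) / c := by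
        calc Real.log t ≤ Real.log (Real.exp ((c * Real.log (β - m) - M) / c)) :=
              Real.log_le_log ht0 (min_le_right _ _)
          _ = (c * Real.log (β - m) - M) / c := Real.log_exp _
      calc c * Real.log t ≤ c * ((c * Real.log (β - m) - M) / c) :=
            mul_le_mul_of_nonneg_left h1 hc.le
        _ = c * Real.log (β - m) - M := by field_simp
    calc M ≤ c * (Real.log (β - m) - Real.log t) := by nlinarith [hlogt]
      _ = ∫ s in m..u, c * (β - s)⁻¹ := hcomp.symm
      _ ≤ h u := hmono
  -- h is unbounded below
  have hlb : ∀ M : ℝ, ∃ u ∈ Set.Ioo α β, h u ≤ M := by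
    intro M
    set t : ℝ := min ((m - α) / 2) (Real.exp ((M + c * Real.log (m - α)) / c)) with htdef
    have ht0 : 0 < t := lt_min (by linarith) (Real.exp_pos _)
    set u : ℝ := α + t with hudef
    have hum : u ≤ m := by
      have : t ≤ (m - α) / 2 := min_le_left _ _
      rw [hudef]; linarith
    have huIoo : u ∈ Set.Ioo α β := ⟨by rw [hudef]; linarith, lt_of_le_of_lt hum hmβ⟩
    refine ⟨u, huIoo, ?_⟩
    have hmono : (∫ s in u..m, c * (s - α)⁻¹) ≤ (∫ s in u..m, g s) := by
      apply intervalIntegral.integral_mono_on hum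
      · apply ContinuousOn.intervalIntegrable
        apply ContinuousOn.mul continuousOn_const
        apply ContinuousOn.inv₀ ((continuous_id.sub continuous_const).continuousOn)
        intro s hs
        rw [Set.uIcc_of_le hum] at hs
        have : α < s := lt_of_lt_of_le huIoo.1 hs.1
        have : 0 < s - α := by linarith
        exact ne_of_gt this
      · exact hg_int u huIoo m hmIoo
      · intro s hs
        exact hgα s ⟨lt_of_lt_of_le huIoo.1 hs.1, lt_of_le_of_lt hs.2 hmβ⟩
    have hcomp : (∫ s in u..m, c * (s - α)⁻¹) = c * (Real.log (m - α) - Real.log t) := by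
      rw [intervalIntegral.integral_const_mul, hlogα u m huIoo.1 hum hmβ]
      rw [hudef]; ring_nf
    have hlogt : c * Real.log t ≤ M + c * Real.log (m - α) := by
      have h1 : Real.log t ≤ (M + c * Real.log (m - α)) / c := by
        calc Real.log t ≤ Real.log (Real.exp ((M + c * Real.log (m - α)) / c)) :=
              Real.log_le_log ht0 (min_le_right _ _)
          _ = (M + c * Real.log (m - α)) / c := Real.log_exp _
      calc c * Real.log t ≤ c * ((M + c * Real.log (m - α)) / c) :=
            mul_le_mul_of_nonneg_left h1 hc.le
        _ = M + c * Real.log (m - α) := by field_simp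
    have hhu : h u = -(∫ s in u..m, g s) := by
      rw [hhdef]
      simp [intervalIntegral.integral_symm u m]
    rw [hhu]
    have : -M ≤ ∫ s in u..m, g s := by
      calc -M ≤ c * (Real.log (m - α) - Real.log t) := by nlinarith [hlogt]
        _ = ∫ s in u..m, c * (s - α)⁻¹ := hcomp.symm
        _ ≤ ∫ s in u..m, g s := hmono
    linarith
  -- surjectivity of h : Ioo α β → ℝ
  have hsurj : ∀ y : ℝ, ∃ u ∈ Set.Ioo α β, h u = y := by
    intro y
    obtain ⟨u₁, hu₁, hy₁⟩ := hlb y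
    obtain ⟨u₂, hu₂, hy₂⟩ := hub y
    have hmem : y ∈ Set.uIcc (h u₁) (h u₂) := Set.mem_uIcc.2 (Or.inl ⟨hy₁, hy₂⟩)
    have hsub' : Set.uIcc u₁ u₂ ⊆ Set.Ioo α β := hIoouIcc u₁ hu₁ u₂ hu₂
    obtain ⟨u, hu, hhu⟩ := intermediate_value_uIcc (hhcont.mono hsub') hmem
    exact ⟨u, hsub' hu, hhu⟩
  -- build the order isomorphism
  haveI : OrdConnected (Set.Ioo α β) := Set.ordConnected_Ioo
  set hcoe : (Set.Ioo α β) → ℝ := fun u => h u with hhcoedef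
  have hhcoemono : StrictMono hcoe := fun a b hab => hhmono a.2 b.2 hab
  have hhcoesurj : Function.Surjective hcoe := by
    intro y
    obtain ⟨u, hu, hhu⟩ := hsurj y
    exact ⟨⟨u, hu⟩, hhu⟩
  set e : (Set.Ioo α β) ≃o ℝ := StrictMono.orderIsoOfSurjective hcoe hhcoemono hhcoesurj with hedef
  set Φ : ℝ → ℝ := fun x => (e.symm (ε⁻¹ * x) : ℝ) with hΦdef
  have hΦmem : ∀ x, Φ x ∈ Set.Ioo α β := fun x => (e.symm (ε⁻¹ * x)).2
  have hhΦ : ∀ x, h (Φ x) = ε⁻¹ * x := by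
    intro x
    have := StrictMono.orderIsoOfSurjective_self_symm_apply hcoe hhcoemono hhcoesurj (ε⁻¹ * x)
    exact this
  have hΦinv : ∀ u (hu : u ∈ Set.Ioo α β), Φ (ε * h u) = u := by
    intro u hu
    have h1 : (ε⁻¹ * (ε * h u)) = hcoe ⟨u, hu⟩ := by
      field_simp
      rfl
    rw [hΦdef]
    simp only [h1]
    rw [hedef, StrictMono.orderIsoOfSurjective_symm_apply_self]
  have hΦmono : StrictMono Φ := by
    intro x y hxy
    have h1 : ε⁻¹ * x < ε⁻¹ * y := by
      apply mul_lt_mul_of_pos_left hxy (inv_pos.2 hε)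
    exact e.symm.strictMono h1
  have hΦcont : Continuous Φ := by
    apply continuous_subtype_val.comp
    exact e.symm.continuous.comp (continuous_const.mul continuous_id)
  have hΦ0 : Φ 0 = m := by
    have : (0 : ℝ) = ε * h m := by rw [hhm]; ring
    calc Φ 0 = Φ (ε * h m) := by rw [← this]
      _ = m := hΦinv m hmIoo
  have hΦderiv : ∀ x, HasDerivAt Φ (Real.sqrt (2 * G (Φ x)) / (ε * D (Φ x))) x := by
    intro x
    have hu := hΦmem x
    have hder : HasDerivAt (fun w => ε * h w) (ε * g (Φ x)) (Φ x) :=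
      (hhderiv (Φ x) hu).const_mul ε
    have hne : ε * g (Φ x) ≠ 0 := ne_of_gt (mul_pos hε (hgpos (Φ x) hu))
    have hfg : ∀ᶠ y in nhds x, ε * h (Φ y) = y := by
      filter_upwards with y
      rw [hhΦ y]; field_simp
    have := HasDerivAt.of_local_left_inverse (hΦcont.continuousAt) hder hne hfg
    refine this.congr_deriv (Eq.symm ?_)
    rw [hgdef]
    have hD0 : D (Φ x) ≠ 0 := ne_of_gt (lt_of_lt_of_le hd (hDd _ (hIooI hu)))
    have hs0 : Real.sqrt (2 * G (Φ x)) ≠ 0 := ne_of_gt (hsqrtpos _ hu)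
    field_simp
  have hΦint : ∀ x, (∫ s in m..(Φ x), D s / Real.sqrt (2 * G s)) = x / ε := by
    intro x
    have := hhΦ x
    rw [hhdef] at this
    simp only at this
    rw [this]
    field_simp
  -- limits
  have hΦtop : Tendsto Φ atTop (nhds β) := by
    rw [tendsto_order]
    constructor
    · intro b hb
      obtain ⟨u', hu'1, hu'2⟩ := exists_between (max_lt hb hmβ)
      have hu'Ioo : u' ∈ Set.Ioo α β :=
        ⟨lt_trans hαm (lt_of_le_of_lt (le_max_right b m) hu'1), hu'2⟩
      filter_upwards [eventually_ge_atTop (ε * h u')] with x hx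
      calc b ≤ max b m := le_max_left b m
        _ < u' := hu'1
        _ = Φ (ε * h u') := (hΦinv u' hu'Ioo).symm
        _ ≤ Φ x := hΦmono.monotone hx
    · intro b hb
      filter_upwards with x
      exact lt_trans (hΦmem x).2 hb
  have hΦbot : Tendsto Φ atBot (nhds α) := by
    rw [tendsto_order]
    constructor
    · intro b hb
      filter_upwards with x
      exact lt_trans hb (hΦmem x).1
    · intro b hb
      obtain ⟨u', hu'1, hu'2⟩ := exists_between (show α < min b m from lt_min hb hαm)
      have hu'Ioo : u' ∈ Set.Ioo α β :=
        ⟨hu'1, lt_trans (lt_of_lt_of_le hu'2 (min_le_right b m)) hmβ⟩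
      filter_upwards [eventually_le_atBot (ε * h u')] with x hx
      calc Φ x ≤ Φ (ε * h u') := hΦmono.monotone hx
        _ = u' := hΦinv u' hu'Ioo
        _ < min b m := hu'2
        _ ≤ b := min_le_left b m
  refine ⟨Φ, ⟨hΦmono, hΦmem, hΦderiv, hΦ0, hΦint, hΦbot, hΦtop⟩, ?_⟩
  -- uniqueness
  intro Ψ hΨmono hΨmem hΨderiv hΨ0
  have hkey : ∀ x, h (Ψ x) = ε⁻¹ * x := by
    have hw : ∀ x, HasDerivAt (fun y => ε * h (Ψ y) - y) 0 x := by
      intro x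
      have h1 : HasDerivAt (fun y => h (Ψ y))
          (g (Ψ x) * (Real.sqrt (2 * G (Ψ x)) / (ε * D (Ψ x)))) x :=
        (hhderiv (Ψ x) (hΨmem x)).comp x (hΨderiv x)
      have h2 := (h1.const_mul ε).sub (hasDerivAt_id x)
      refine h2.congr_deriv (Eq.symm ?_)
      rw [hgdef]
      have hD0 : (0:ℝ) < D (Ψ x) := lt_of_lt_of_le hd (hDd _ (hIooI (hΨmem x)))
      have hs0 : (0:ℝ) < Real.sqrt (2 * G (Ψ x)) := hsqrtpos _ (hΨmem x)
      have halg : ∀ a s : ℝ, a ≠ 0 → s ≠ 0 → 0 = ε * (a / s * (s / (ε * a))) - 1 := by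
        intro a s ha hs
        field_simp
        norm_num
      show (0:ℝ) = ε * (g (Ψ x) * (Real.sqrt (2 * G (Ψ x)) / (ε * D (Ψ x)))) - 1
      rw [hgdef]
      exact halg _ _ hD0.ne' hs0.ne'
    have hconst : ∀ x : ℝ, (fun y => ε * h (Ψ y) - y) x = (fun y => ε * h (Ψ y) - y) 0 := by
      intro x
      exact is_const_of_deriv_eq_zero (fun y => (hw y).differentiableAt)
        (fun y => (hw y).deriv) x 0
    intro x
    have := hconst x
    simp only at this
    rw [hΨ0, hhm] at this
    have h1 : ε * h (Ψ x) = x := by linarith [this]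
    field_simp
    linarith [h1]
  funext x
  apply hhmono.injOn (hΨmem x) (hΦmem x)
  rw [hkey x, hhΦ x]
end

section
/- Let $D\in C^1(I)$ with $D\geq d>0$, $G\in C^3(I)$ an equal-depth double-well potential with wells at $\alpha<\beta$, $v$ an $N$-transition piecewise constant function with jumps $h_1<\dots<h_N$ and separation parameter $r$, and $K\subset I\setminus\{\alpha,\beta\}$ closed. For any $\delta_1\in(0,r)$ there exist $\hat\delta,\varepsilon_0,M>0$ such that: for all $\varepsilon\in(0,\varepsilon_0)$ and all $u\in H^1(a,b)$ with values in a fixed compact subinterval of $I$, if $\|u-v\|_{L^1}<\hat\delta$ and $E_\varepsilon[u]\leq N\gamma_0+M$, then the Hausdorff distance satisfies $d(I_K[u],I[v])<\frac{1}{2}\delta_1$, where $I_K[u]=u^{-1}(K)$ and $I[v]=\{h_1,\dots,h_N\}$. -/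
open MeasureTheory Set

private lemma chain_mono {t : ℕ → ℝ} {m : ℕ} (h : ∀ j, j < m → t j ≤ t (j+1)) :
    ∀ i j, i ≤ j → j ≤ m → t i ≤ t j := by
  intro i j hij hjm
  induction j with
  | zero => simp [Nat.le_zero.mp hij]
  | succ k ih =>
    rcases Nat.lt_or_ge i (k+1) with hl | hg
    · exact le_trans (ih (by omega) (by omega)) (h k (by omega))
    · have : i = k+1 := by omega
      simp [this]

private lemma aux_chain {a b : ℝ} (e ψ : ℝ → ℝ) (hab : a ≤ b)
    (heInt : IntervalIntegrable e volume a b)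
    (he0 : ∀ t ∈ Set.Icc a b, 0 ≤ e t)
    (hE : ∀ x y, a ≤ x → x ≤ y → y ≤ b → |ψ y - ψ x| ≤ ∫ t in x..y, e t)
    (m : ℕ) (t : ℕ → ℝ) (x y : ℝ) (hax : a ≤ x) (hyb : y ≤ b)
    (hxt : x ≤ t 0) (hty : t m ≤ y)
    (hmono : ∀ j, j < m → t j ≤ t (j+1)) :
    (∑ j ∈ Finset.range m, |ψ (t (j+1)) - ψ (t j)|) ≤ ∫ s in x..y, e s := by
  have hxy : x ≤ y := hxt.trans ((chain_mono hmono 0 m (Nat.zero_le _) le_rfl).trans hty)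
  have hmem : ∀ j, j ≤ m → t j ∈ Set.Icc a b := by
    intro j hj
    exact ⟨hax.trans (hxt.trans (chain_mono hmono 0 j (Nat.zero_le _) hj)),
      ((chain_mono hmono j m hj le_rfl).trans hty).trans hyb⟩
  have hxab : x ∈ Set.Icc a b := ⟨hax, hxy.trans hyb⟩
  have hyab : y ∈ Set.Icc a b := ⟨hax.trans hxy, hyb⟩
  have hsub : ∀ c d, c ∈ Set.Icc a b → d ∈ Set.Icc a b → IntervalIntegrable e volume c d := by
    intro c d hc hd
    refine heInt.mono_set ?_
    rw [Set.uIcc_of_le hab]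
    exact Set.uIcc_subset_Icc hc hd
  have core : ∀ k, k ≤ m → (∑ j ∈ Finset.range k, |ψ (t (j+1)) - ψ (t j)|) ≤ ∫ s in (t 0)..(t k), e s := by
    intro k hk
    induction k with
    | zero => simp
    | succ k ih =>
      rw [Finset.sum_range_succ]
      have h1 := ih (by omega)
      have h2 := hE (t k) (t (k+1)) (hmem k (by omega)).1 (hmono k (by omega)) (hmem (k+1) hk).2
      have h3 := intervalIntegral.integral_add_adjacent_intervals (μ := volume) (f := e)
        (hsub (t 0) (t k) (hmem 0 (Nat.zero_le _)) (hmem k (by omega)))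
        (hsub (t k) (t (k+1)) (hmem k (by omega)) (hmem (k+1) hk))
      linarith
  have h4 := core m le_rfl
  have e1 : 0 ≤ ∫ s in x..(t 0), e s :=
    intervalIntegral.integral_nonneg hxt (fun s hs => he0 s ⟨hax.trans hs.1, hs.2.trans (hmem 0 (Nat.zero_le _)).2⟩)
  have e2 : 0 ≤ ∫ s in (t m)..y, e s :=
    intervalIntegral.integral_nonneg hty (fun s hs => he0 s ⟨(hmem m le_rfl).1.trans hs.1, hs.2.trans hyb⟩)
  have s1 := intervalIntegral.integral_add_adjacent_intervals (μ := volume) (f := e)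
    (hsub x (t 0) hxab (hmem 0 (Nat.zero_le _))) (hsub (t 0) (t m) (hmem 0 (Nat.zero_le _)) (hmem m le_rfl))
  have s2 := intervalIntegral.integral_add_adjacent_intervals (μ := volume) (f := e)
    (hsub x (t m) hxab (hmem m le_rfl)) (hsub (t m) y (hmem m le_rfl) hyab)
  linarith

private lemma sum_extract (g : ℕ → ℝ) (hg : ∀ j, 0 ≤ g j) (s ρ : ℕ) (cP cE : ℝ)
    (hρ : ρ = 2*s ∨ ρ = 2*s+1) (hρ1 : 1 ≤ ρ)
    (hpair : ∀ i, i < s → cP ≤ g (2*i)) (hextra : cE ≤ g (ρ-1)) :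
    (s : ℝ) * cP + cE ≤ ∑ j ∈ Finset.range ρ, g j := by
  classical
  have hTsub : ((Finset.range s).image (fun i => 2*i)) ∪ {ρ-1} ⊆ Finset.range ρ := by
    intro j hj
    simp only [Finset.mem_union, Finset.mem_image, Finset.mem_range, Finset.mem_singleton] at hj ⊢
    rcases hj with ⟨i, hi, rfl⟩ | rfl <;> omega
  have hdisj : Disjoint ((Finset.range s).image (fun i => 2*i)) ({ρ-1} : Finset ℕ) := by
    rw [Finset.disjoint_left]
    intro j hj hj2
    simp only [Finset.mem_image, Finset.mem_range] at hj
    simp only [Finset.mem_singleton] at hj2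
    obtain ⟨i, hi, rfl⟩ := hj
    omega
  have h1 : ∑ j ∈ ((Finset.range s).image (fun i => 2*i)) ∪ {ρ-1}, g j ≤ ∑ j ∈ Finset.range ρ, g j :=
    Finset.sum_le_sum_of_subset_of_nonneg hTsub (fun i _ _ => hg i)
  rw [Finset.sum_union hdisj, Finset.sum_image (by intro x _ y _ hxy; simp only at hxy; omega), Finset.sum_singleton] at h1
  have h2 : (s:ℝ) * cP ≤ ∑ i ∈ Finset.range s, g (2*i) := by
    calc (s:ℝ) * cP = ∑ _i ∈ Finset.range s, cP := by
          rw [Finset.sum_const, Finset.card_range, nsmul_eq_mul]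
      _ ≤ _ := Finset.sum_le_sum (fun i hi => hpair i (Finset.mem_range.mp hi))
  linarith

private lemma sum_extract' (g : ℕ → ℝ) (hg : ∀ j, 0 ≤ g j) (s' Nn ρ : ℕ) (cP cE : ℝ)
    (hρ : ρ = 2*s' ∨ ρ + 1 = 2*s') (hρm : ρ < 2*Nn) (hs'N : s' ≤ Nn)
    (hpair : ∀ i, s' ≤ i → i < Nn → cP ≤ g (2*i+1-ρ)) (hextra : cE ≤ g 0) :
    ((Nn - s' : ℕ) : ℝ) * cP + cE ≤ ∑ j ∈ Finset.range (2*Nn - ρ), g j := by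
  classical
  have hTsub : ((Finset.Ico s' Nn).image (fun i => 2*i+1-ρ)) ∪ {0} ⊆ Finset.range (2*Nn - ρ) := by
    intro j hj
    simp only [Finset.mem_union, Finset.mem_image, Finset.mem_Ico, Finset.mem_range,
      Finset.mem_singleton] at hj ⊢
    rcases hj with ⟨i, hi, rfl⟩ | rfl <;> omega
  have hdisj : Disjoint ((Finset.Ico s' Nn).image (fun i => 2*i+1-ρ)) ({0} : Finset ℕ) := by
    rw [Finset.disjoint_left]
    intro j hj hj2
    simp only [Finset.mem_image, Finset.mem_Ico] at hj
    simp only [Finset.mem_singleton] at hj2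
    obtain ⟨i, hi, rfl⟩ := hj
    omega
  have h1 : ∑ j ∈ ((Finset.Ico s' Nn).image (fun i => 2*i+1-ρ)) ∪ {0}, g j ≤ ∑ j ∈ Finset.range (2*Nn-ρ), g j :=
    Finset.sum_le_sum_of_subset_of_nonneg hTsub (fun i _ _ => hg i)
  rw [Finset.sum_union hdisj, Finset.sum_image (by intro x hx y hy hxy; simp only [Finset.coe_Ico, Set.mem_Ico, Finset.mem_coe, Finset.mem_Ico] at hx hy hxy; omega),
    Finset.sum_singleton] at h1
  have h2 : ((Nn - s' : ℕ):ℝ) * cP ≤ ∑ i ∈ Finset.Ico s' Nn, g (2*i+1-ρ) := by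
    calc ((Nn - s' : ℕ):ℝ) * cP = ∑ _i ∈ Finset.Ico s' Nn, cP := by
          rw [Finset.sum_const, Nat.card_Ico, nsmul_eq_mul]
      _ ≤ _ := Finset.sum_le_sum (fun i hi => by
          simp only [Finset.mem_Ico] at hi; exact hpair i hi.1 hi.2)
  linarith

private lemma combo_single {A c c₀ γ₀ η μ : ℝ} (hA : |A - c₀| ≤ η) (h₀ : c₀ = 0 ∨ c₀ = γ₀)
    (hc1 : μ ≤ |c|) (hc2 : μ ≤ |c - γ₀|) : μ - η ≤ |c - A| := by
  have ht : |c - c₀| ≤ |c - A| + |A - c₀| := abs_sub_le c A c₀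
  rcases h₀ with rfl | rfl
  · simp only [sub_zero] at ht hA; linarith
  · linarith

private lemma combo_pair {A B c γ₀ η μ : ℝ} (hη : 0 < η) (hημ : η < μ)
    (hLR : (|A| ≤ η ∧ |B - γ₀| ≤ η) ∨ (|A - γ₀| ≤ η ∧ |B| ≤ η))
    (hc1 : μ ≤ |c|) (hc2 : μ ≤ |c - γ₀|)
    (hout : c ≤ η ∨ γ₀ - η ≤ c) :
    γ₀ - 2*η + 2*(μ - η) ≤ |c - A| + |B - c| := by
  have h1 : A - c ≤ |c - A| := by rw [abs_sub_comm]; exact le_abs_self _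
  have h2 : c - A ≤ |c - A| := le_abs_self _
  have h3 : B - c ≤ |B - c| := le_abs_self _
  have h4 : c - B ≤ |B - c| := by rw [abs_sub_comm]; exact le_abs_self _
  rcases hout with hout | hout
  · have hcneg : c ≤ -μ := by
      rcases abs_cases c with ⟨e1, e2⟩ | ⟨e1, e2⟩
      · linarith
      · linarith
    rcases hLR with ⟨hA, hB⟩ | ⟨hA, hB⟩
    · rw [abs_le] at hA hB; linarith
    · rw [abs_le] at hA hB; linarith
  · have hcpos : γ₀ + μ ≤ c := by
      rcases abs_cases (c - γ₀) with ⟨e1, e2⟩ | ⟨e1, e2⟩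
      · linarith
      · linarith
    rcases hLR with ⟨hA, hB⟩ | ⟨hA, hB⟩
    · rw [abs_le] at hA hB; linarith
    · rw [abs_le] at hA hB; linarith

private lemma aux_sample {a b c₁ c₂ σ δhat w : ℝ} {u v : ℝ → ℝ}
    (hc : c₁ < c₂) (hac : a ≤ c₁) (hcb : c₂ ≤ b)
    (hu : ContinuousOn u (Set.Icc a b))
    (hv : ∀ x ∈ Set.Icc c₁ c₂, v x = w)
    (hσ : 0 < σ) (hδ : δhat ≤ σ * (c₂ - c₁))
    (hInt : IntervalIntegrable (fun x => |u x - v x|) volume a b)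
    (hL1 : (∫ x in a..b, |u x - v x|) < δhat) :
    ∃ p ∈ Set.Icc c₁ c₂, |u p - w| ≤ σ := by
  by_contra hcon
  push_neg at hcon
  have h1 : (∫ x in c₁..c₂, |u x - v x|) ≤ ∫ x in a..b, |u x - v x| :=
    intervalIntegral.integral_mono_interval hac hc.le hcb
      (Filter.Eventually.of_forall (fun x => abs_nonneg _)) hInt
  have h2 : (∫ x in c₁..c₂, |u x - v x|) = ∫ x in c₁..c₂, |u x - w| := by
    apply intervalIntegral.integral_congr
    intro x hx
    rw [Set.uIcc_of_le hc.le] at hx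
    show |u x - v x| = |u x - w|
    rw [hv x hx]
  have hIuw : IntervalIntegrable (fun x => |u x - w|) volume c₁ c₂ := by
    apply ContinuousOn.intervalIntegrable
    rw [Set.uIcc_of_le hc.le]
    exact ((hu.mono (Set.Icc_subset_Icc hac hcb)).sub continuousOn_const).abs
  have h3 : σ * (c₂ - c₁) ≤ ∫ x in c₁..c₂, |u x - w| := by
    have := intervalIntegral.integral_mono_on hc.le intervalIntegrable_const hIuw
      (fun x hx => (hcon x hx).le)
    rwa [intervalIntegral.integral_const, smul_eq_mul, mul_comm] at this
  linarith
private noncomputable def auxF (G D : ℝ → ℝ) : ℝ → ℝ := fun s => Real.sqrt (2 * G s) * D s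
private noncomputable def auxφ (G D : ℝ → ℝ) (α : ℝ) : ℝ → ℝ := fun s => ∫ t in α..s, auxF G D t

set_option maxHeartbeats 1000000 in
/-- Interface localization lemma: if `‖u - v‖_{L¹} < δ̂` and `E_ε[u] ≤ N γ₀ + M`, then
the Hausdorff distance between `I_K[u] = u⁻¹(K)` and `I[v] = {h₁,…,h_N}` is less than
`δ₁/2`. -/
theorem stmt16
    (I : Set ℝ) (hIopen : IsOpen I) (hIconn : I.OrdConnected)
    (D G : ℝ → ℝ) (d α β : ℝ) (hαβ : α < β) (hsub : Set.Icc α β ⊆ I)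
    (hD : ContDiffOn ℝ 1 D I) (hd : 0 < d) (hDd : ∀ s ∈ I, d ≤ D s)
    (hGreg : ContDiffOn ℝ 3 G I)
    (hGα : G α = 0) (hGβ : G β = 0)
    (hG'α : deriv G α = 0) (hG'β : deriv G β = 0)
    (hG''α : 0 < deriv (deriv G) α) (hG''β : 0 < deriv (deriv G) β)
    (hGpos : ∀ s ∈ I, s ≠ α → s ≠ β → 0 < G s)
    (γ₀ : ℝ) (hγ₀ : γ₀ = ∫ s in α..β, Real.sqrt (2 * G s) * D s)
    (a b r : ℝ) (hab : a < b) (hr : 0 < r)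
    (N : ℕ) (h : Fin N → ℝ) (hmono : StrictMono h)
    (hsep : ∀ i j : Fin N, i < j → h i + r < h j - r)
    (hha : ∀ i, a ≤ h i - r) (hhb : ∀ i, h i + r ≤ b)
    (v : ℝ → ℝ)
    (hvval : ∀ x ∈ Set.Icc a b, v x = α ∨ v x = β)
    (hvconst : ∀ x ∈ Set.Icc a b, ∀ y ∈ Set.Icc a b, x ≤ y →
      (∀ i, ¬(x ≤ h i ∧ h i ≤ y)) → v x = v y)
    (hvjump : ∀ i, v (h i - r) ≠ v (h i + r))
    (M₁ M₂ : ℝ) (hM : M₁ ≤ M₂) (hMsub : Set.Icc M₁ M₂ ⊆ I)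
    (K : Set ℝ) (hK : IsClosed K) (hKsub : K ⊆ I \ {α, β})
    (δ₁ : ℝ) (hδ₁ : 0 < δ₁) (hδ₁r : δ₁ < r) :
    ∃ δhat > (0:ℝ), ∃ ε₀ > (0:ℝ), ∃ M > (0:ℝ), ∀ ε ∈ Set.Ioo (0:ℝ) ε₀,
      ∀ u u' : ℝ → ℝ,
        (∀ x ∈ Set.Icc a b, HasDerivAt u (u' x) x) →
        IntervalIntegrable (fun x => (u' x) ^ 2) volume a b →
        (∀ x ∈ Set.Icc a b, u x ∈ Set.Icc M₁ M₂) →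
        (∫ x in a..b, |u x - v x|) < δhat →
        (∫ x in a..b, (ε / 2 * (D (u x) * u' x) ^ 2 + G (u x) / ε)) ≤ (N : ℝ) * γ₀ + M →
        Metric.hausdorffDist (Set.Icc a b ∩ u ⁻¹' K) (Set.range h) < δ₁ / 2 := by
  classical
  rcases Nat.eq_zero_or_pos N with hN0 | hNpos
  · subst hN0
    refine ⟨1, one_pos, 1, one_pos, 1, one_pos, ?_⟩
    intro ε hε u u' hu hu2 huval hL1 hEn
    have hre : Set.range h = ∅ := Set.range_eq_empty h
    rw [hre, Metric.hausdorffDist_empty]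
    positivity
  have hαI : α ∈ I := hsub ⟨le_rfl, hαβ.le⟩
  have hβI : β ∈ I := hsub ⟨hαβ.le, le_rfl⟩
  have hM₁I : M₁ ∈ I := hMsub ⟨le_rfl, hM⟩
  have hM₂I : M₂ ∈ I := hMsub ⟨hM, le_rfl⟩
  set Jlo := min M₁ α with hJlo
  set Jhi := max M₂ β with hJhi
  have hJloI : Jlo ∈ I := by
    rcases min_cases M₁ α with ⟨h1, _⟩ | ⟨h1, _⟩ <;> rw [hJlo, h1] <;> assumption
  have hJhiI : Jhi ∈ I := by
    rcases max_cases M₂ β with ⟨h1, _⟩ | ⟨h1, _⟩ <;> rw [hJhi, h1] <;> assumption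
  set J := Set.Icc Jlo Jhi with hJ
  have hJI : J ⊆ I := hIconn.out hJloI hJhiI
  have hαJ : α ∈ J := ⟨min_le_right _ _, hαβ.le.trans (le_max_right _ _)⟩
  have hβJ : β ∈ J := ⟨(min_le_right _ _).trans hαβ.le, le_max_right _ _⟩
  have hMJ : Set.Icc M₁ M₂ ⊆ J := Set.Icc_subset_Icc (min_le_left _ _) (le_max_left _ _)
  have hGc : ContinuousOn G I := hGreg.continuousOn
  have hDc : ContinuousOn D I := hD.continuousOn
  have hG0 : ∀ s ∈ I, 0 ≤ G s := by
    intro s hs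
    by_cases h1 : s = α
    · rw [h1, hGα]
    by_cases h2 : s = β
    · rw [h2, hGβ]
    exact (hGpos s hs h1 h2).le
  have hFc : ContinuousOn (auxF G D) I := by
    unfold auxF
    exact (Real.continuous_sqrt.comp_continuousOn (continuousOn_const.mul hGc)).mul hDc
  have hF0 : ∀ s ∈ I, 0 ≤ auxF G D s := fun s hs =>
    mul_nonneg (Real.sqrt_nonneg _) (hd.le.trans (hDd s hs))
  have hFpos : ∀ s ∈ I, s ≠ α → s ≠ β → 0 < auxF G D s := fun s hs h1 h2 =>
    mul_pos (Real.sqrt_pos.2 (by linarith [hGpos s hs h1 h2])) (hd.trans_le (hDd s hs))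
  have hFint : ∀ s ∈ I, ∀ t ∈ I, IntervalIntegrable (auxF G D) volume s t := fun s hs t ht =>
    (hFc.mono (hIconn.uIcc_subset hs ht)).intervalIntegrable
  have hφd : ∀ s ∈ I, HasDerivAt (auxφ G D α) (auxF G D s) s := by
    intro s hs
    exact intervalIntegral.integral_hasDerivAt_right (hFint α hαI s hs)
      ⟨I, hIopen.mem_nhds hs, (hFc.mono subset_rfl).aestronglyMeasurable hIopen.measurableSet⟩
      (hFc.continuousAt (hIopen.mem_nhds hs))
  have hφc : ContinuousOn (auxφ G D α) I := fun s hs => ((hφd s hs).continuousAt).continuousWithinAt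
  have hφα : auxφ G D α α = 0 := intervalIntegral.integral_same
  have hφβ : auxφ G D α β = γ₀ := by rw [hγ₀]; rfl
  have hkeyint : ∀ s t : ℝ, s ∈ J → t ∈ J → s < t → 0 < ∫ x in s..t, auxF G D x := by
    intro s t hs ht hst
    have hsI := hJI hs; have htI := hJI ht
    have hIccJ : Set.Icc s t ⊆ J := Set.Icc_subset_Icc hs.1 ht.2
    have hsplit : ∀ w, w ∈ Set.Ioo s t → (∀ x ∈ Set.Ioo s w, x ≠ α ∧ x ≠ β) →
        0 < ∫ x in s..t, auxF G D x := by
      intro w hw hne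
      have hwI : w ∈ I := hJI (hIccJ ⟨hw.1.le, hw.2.le⟩)
      have h1 : 0 < ∫ x in s..w, auxF G D x := by
        apply intervalIntegral.intervalIntegral_pos_of_pos_on (hFint s hsI w hwI) _ hw.1
        intro x hx
        have hxI : x ∈ I := hJI (hIccJ ⟨hx.1.le, hx.2.le.trans hw.2.le⟩)
        exact hFpos x hxI (hne x hx).1 (hne x hx).2
      have h2 : 0 ≤ ∫ x in w..t, auxF G D x := by
        apply intervalIntegral.integral_nonneg hw.2.le
        intro x hx
        exact hF0 x (hJI (hIccJ ⟨hw.1.le.trans hx.1, hx.2⟩))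
      have h3 := intervalIntegral.integral_add_adjacent_intervals (μ := volume) (f := auxF G D)
        (hFint s hsI w hwI) (hFint w hwI t htI)
      linarith
    by_cases hA : s < α ∧ α < t
    · refine hsplit α ⟨hA.1, hA.2⟩ (fun x hx => ⟨ne_of_lt hx.2, ne_of_lt (hx.2.trans hαβ)⟩)
    · by_cases hB : s < β ∧ β < t
      · refine hsplit β ⟨hB.1, hB.2⟩ (fun x hx => ⟨?_, ne_of_lt hx.2⟩)
        push_neg at hA
        rcases le_or_gt α s with hc | hc
        · exact ne_of_gt (hc.trans_lt hx.1)
        · exfalso; have := hA hc; linarith [hB.2, hαβ]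
      · apply hsplit ((s+t)/2) ⟨by linarith, by linarith⟩
        intro x hx
        push_neg at hA hB
        have hxt : x < t := by
          rcases hx with ⟨hx1, hx2⟩; linarith
        constructor
        · intro hc
          rw [hc] at hx hxt
          rcases le_or_gt α s with hc2 | hc2
          · exact absurd hx.1 (not_lt.2 hc2)
          · exact absurd (hA hc2) (not_le.2 hxt)
        · intro hc
          rw [hc] at hx hxt
          rcases le_or_gt β s with hc2 | hc2
          · exact absurd hx.1 (not_lt.2 hc2)
          · exact absurd (hB hc2) (not_le.2 hxt)
  have hφmono : StrictMonoOn (auxφ G D α) J := by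
    intro s hs t ht hst
    have h1 : auxφ G D α t - auxφ G D α s = ∫ x in s..t, auxF G D x :=
      intervalIntegral.integral_interval_sub_left (hFint α hαI t (hJI ht)) (hFint α hαI s (hJI hs))
    have := hkeyint s t hs ht hst
    linarith
  have hφinj := hφmono.injOn
  have hγpos : 0 < γ₀ := by
    have := hkeyint α β hαJ hβJ hαβ
    rw [hγ₀]; exact this
  -- μ : minimum well-distance over K ∩ J
  obtain ⟨μ, hμpos, hμ⟩ : ∃ μ : ℝ, 0 < μ ∧ ∀ k ∈ K ∩ J,
      μ ≤ min |auxφ G D α k| |auxφ G D α k - γ₀| := by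
    by_cases hne : (K ∩ J).Nonempty
    · have hKcpt : IsCompact (K ∩ J) := isCompact_Icc.inter_left hK
      have hWc : ContinuousOn (fun k => min |auxφ G D α k| |auxφ G D α k - γ₀|) (K ∩ J) := by
        have hsub' : (K ∩ J) ⊆ I := fun k hk => hJI hk.2
        exact continuous_min.comp_continuousOn
          (((hφc.mono hsub').abs).prodMk (((hφc.mono hsub').sub continuousOn_const).abs))
      obtain ⟨k₀, hk₀, hmin⟩ := hKcpt.exists_isMinOn hne hWc
      refine ⟨_, ?_, fun k hk => hmin hk⟩
      have hk₀α : k₀ ≠ α := fun hc => (hKsub hk₀.1).2 (by simp [hc])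
      have hk₀β : k₀ ≠ β := fun hc => (hKsub hk₀.1).2 (by simp [hc])
      have h1 : auxφ G D α k₀ ≠ 0 := fun hc => hk₀α (hφinj hk₀.2 hαJ (by rw [hc, hφα]))
      have h2 : auxφ G D α k₀ ≠ γ₀ := fun hc => hk₀β (hφinj hk₀.2 hβJ (by rw [hc, hφβ]))
      exact lt_min (abs_pos.2 h1) (abs_pos.2 (sub_ne_zero.2 h2))
    · exact ⟨1, one_pos, fun k hk => ((hne ⟨k, hk⟩).elim)⟩
  set n := (N : ℝ) with hn
  have hn1 : 1 ≤ n := by rw [hn]; exact_mod_cast hNpos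
  set η := μ / (4*n+4) with hηdef
  have hηpos : 0 < η := by rw [hηdef]; positivity
  have hημ : η < μ := by
    rw [hηdef]
    exact div_lt_self hμpos (by linarith)
  have hηeq : η * (4*n+4) = μ := by rw [hηdef]; field_simp
  -- σ from continuity of φ at the wells
  obtain ⟨σα, hσα0, hσα⟩ := Metric.continuousAt_iff.1 (hφd α hαI).continuousAt η hηpos
  obtain ⟨σβ, hσβ0, hσβ⟩ := Metric.continuousAt_iff.1 (hφd β hβI).continuousAt η hηpos
  set σ := min σα σβ / 2 with hσdef
  have hσpos : 0 < σ := by rw [hσdef]; positivity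
  have hφnear : ∀ s w : ℝ, w = α ∨ w = β → |s - w| ≤ σ → |auxφ G D α s - auxφ G D α w| ≤ η := by
    intro s w hw hsw
    have hσα' : σ < σα := by
      rw [hσdef]
      have := min_le_left σα σβ
      linarith
    have hσβ' : σ < σβ := by
      rw [hσdef]
      have := min_le_right σα σβ
      linarith
    rcases hw with hw | hw
    · rw [hw] at hsw ⊢
      have := hσα (show dist s α < σα by rw [Real.dist_eq]; linarith)
      rw [Real.dist_eq] at this
      exact this.le
    · rw [hw] at hsw ⊢
      have := hσβ (show dist s β < σβ by rw [Real.dist_eq]; linarith)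
      rw [Real.dist_eq] at this
      exact this.le
  refine ⟨σ * (δ₁/8), by positivity, 1, one_pos, μ/4, by positivity, ?_⟩
  intro ε hε u u' hu hu2 huval hL1 hEn
  have hε0 : (0:ℝ) < ε := hε.1
  have hucont : ContinuousOn u (Set.Icc a b) := fun x hx => (hu x hx).continuousAt.continuousWithinAt
  have huJ : ∀ x ∈ Set.Icc a b, u x ∈ J := fun x hx => hMJ (huval x hx)
  have huI : ∀ x ∈ Set.Icc a b, u x ∈ I := fun x hx => hJI (huJ x hx)
  set e := fun x => ε / 2 * (D (u x) * u' x) ^ 2 + G (u x) / ε with he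
  have he0 : ∀ x ∈ Set.Icc a b, 0 ≤ e x := by
    intro x hx
    have h1 := hG0 (u x) (huI x hx)
    exact add_nonneg (mul_nonneg (by positivity) (sq_nonneg _)) (div_nonneg h1 hε0.le)
  obtain ⟨CF, hCF⟩ := isCompact_Icc.exists_bound_of_continuousOn (hFc.comp hucont huI)
  obtain ⟨CD, hCD⟩ := isCompact_Icc.exists_bound_of_continuousOn (hDc.comp hucont huI)
  obtain ⟨CG, hCG⟩ := isCompact_Icc.exists_bound_of_continuousOn (hGc.comp hucont huI)
  simp only [Function.comp_apply, Real.norm_eq_abs] at hCF hCD hCG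
  have hderiv : ∀ t ∈ Set.Icc a b, deriv u t = u' t := fun t ht => (hu t ht).deriv
  have hIocsub : ∀ x y : ℝ, a ≤ x → y ≤ b → Set.Ioc x y ⊆ Set.Icc a b := by
    intro x y h1 h2 t ht
    exact ⟨h1.trans ht.1.le, ht.2.trans h2⟩
  have hu'AESM : ∀ x y : ℝ, a ≤ x → y ≤ b →
      AEStronglyMeasurable u' (volume.restrict (Set.Ioc x y)) := by
    intro x y h1 h2
    refine ((measurable_deriv u).aestronglyMeasurable).congr ?_
    exact (ae_restrict_iff' measurableSet_Ioc).2
      (Filter.Eventually.of_forall fun t ht => hderiv t (hIocsub x y h1 h2 ht))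
  have husqInt : ∀ x y : ℝ, a ≤ x → x ≤ y → y ≤ b →
      IntegrableOn (fun t => (u' t)^2) (Set.Ioc x y) volume := by
    intro x y h1 h2 h3
    refine (intervalIntegrable_iff_integrableOn_Ioc_of_le h2).1 (hu2.mono_set ?_)
    rw [Set.uIcc_of_le h2, Set.uIcc_of_le hab.le]
    exact Set.Icc_subset_Icc h1 h3
  have hgInt : ∀ x y : ℝ, a ≤ x → x ≤ y → y ≤ b →
      IntervalIntegrable (fun t => auxF G D (u t) * u' t) volume x y := by
    intro x y h1 h2 h3
    rw [intervalIntegrable_iff_integrableOn_Ioc_of_le h2]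
    refine Integrable.mono' (g := fun t => (CF^2 + (u' t)^2)/2) ?_ ?_ ?_
    · exact ((integrableOn_const measure_Ioc_lt_top.ne).add (husqInt x y h1 h2 h3)).div_const 2
    · exact (((hFc.comp hucont huI).mono (hIocsub x y h1 h3)).aestronglyMeasurable
        measurableSet_Ioc).mul (hu'AESM x y h1 h3)
    · refine (ae_restrict_iff' measurableSet_Ioc).2 (Filter.Eventually.of_forall fun t ht => ?_)
      have hb1 := hCF t (hIocsub x y h1 h3 ht)
      rw [Real.norm_eq_abs, abs_mul]
      have h9 := sq_nonneg (CF - |u' t|)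
      have h10 : (CF - |u' t|)^2 = CF^2 + |u' t|^2 - 2*(CF*|u' t|) := by ring
      have h11 : |u' t|^2 = (u' t)^2 := sq_abs _
      have h12 : |auxF G D (u t)| * |u' t| ≤ CF * |u' t| :=
        mul_le_mul_of_nonneg_right hb1 (abs_nonneg _)
      linarith [h9, h10, h11, h12]
  have heInt : ∀ x y : ℝ, a ≤ x → x ≤ y → y ≤ b → IntervalIntegrable e volume x y := by
    intro x y h1 h2 h3
    rw [intervalIntegrable_iff_integrableOn_Ioc_of_le h2]
    refine Integrable.mono' (g := fun t => ε/2 * CD^2 * (u' t)^2 + CG/ε) ?_ ?_ ?_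
    · exact ((husqInt x y h1 h2 h3).const_mul (ε/2 * CD^2)).add
        (integrableOn_const measure_Ioc_lt_top.ne)
    · have hDu : AEStronglyMeasurable (fun t => D (u t)) (volume.restrict (Set.Ioc x y)) :=
        ((hDc.comp hucont huI).mono (hIocsub x y h1 h3)).aestronglyMeasurable measurableSet_Ioc
      have hmul := hDu.mul (hu'AESM x y h1 h3)
      have hsq : AEStronglyMeasurable (fun t => (D (u t) * u' t)^2) (volume.restrict (Set.Ioc x y)) := by
        have h5 := hmul.mul hmul
        refine h5.congr (Filter.Eventually.of_forall fun t => ?_)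
        simp only [Pi.mul_apply, Pi.pow_apply]
        ring
      have hGu : AEStronglyMeasurable (fun t => G (u t)) (volume.restrict (Set.Ioc x y)) :=
        ((hGc.comp hucont huI).mono (hIocsub x y h1 h3)).aestronglyMeasurable measurableSet_Ioc
      have hq1 : AEStronglyMeasurable (fun t => ε / 2 * (D (u t) * u' t) ^ 2)
          (volume.restrict (Set.Ioc x y)) := hsq.const_mul (ε/2)
      have hq2 : AEStronglyMeasurable (fun t => G (u t) / ε) (volume.restrict (Set.Ioc x y)) := by
        refine (hGu.mul_const ε⁻¹).congr (Filter.Eventually.of_forall fun t => ?_)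
        simp [div_eq_mul_inv]
      exact hq1.add hq2
    · refine (ae_restrict_iff' measurableSet_Ioc).2 (Filter.Eventually.of_forall fun t ht => ?_)
      have htab := hIocsub x y h1 h3 ht
      have hb1 := hCD t htab
      have hb2 := hCG t htab
      rw [Real.norm_eq_abs, abs_of_nonneg (he0 t htab)]
      have hD2 : (D (u t))^2 ≤ CD^2 := by
        have h13 : (D (u t))^2 = |D (u t)| * |D (u t)| := by rw [← sq_abs]; ring
        have h14 := mul_self_le_mul_self (abs_nonneg (D (u t))) hb1
        have h15 : CD^2 = CD * CD := by ring
        linarith [h13, h14, h15]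
      have hq1 : (D (u t) * u' t)^2 ≤ CD^2 * (u' t)^2 := by
        rw [mul_pow]
        exact mul_le_mul_of_nonneg_right hD2 (sq_nonneg _)
      have hq2 : G (u t) / ε ≤ CG / ε :=
        (div_le_div_iff_of_pos_right hε0).2 ((le_abs_self _).trans hb2)
      have hq3 : ε/2 * (D (u t) * u' t)^2 ≤ ε/2 * (CD^2 * (u' t)^2) :=
        mul_le_mul_of_nonneg_left hq1 (by positivity)
      show ε/2 * (D (u t) * u' t)^2 + G (u t)/ε ≤ ε/2 * CD^2 * (u' t)^2 + CG/ε
      have hq4 : ε/2 * (CD^2 * (u' t)^2) = ε/2 * CD^2 * (u' t)^2 := by ring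
      linarith [hq2, hq3, hq4]
  have hE : ∀ x y : ℝ, a ≤ x → x ≤ y → y ≤ b →
      |auxφ G D α (u y) - auxφ G D α (u x)| ≤ ∫ t in x..y, e t := by
    intro x y h1 h2 h3
    have hIccsub : Set.Icc x y ⊆ Set.Icc a b := Set.Icc_subset_Icc h1 h3
    have hftc : ∫ t in x..y, auxF G D (u t) * u' t = auxφ G D α (u y) - auxφ G D α (u x) := by
      refine intervalIntegral.integral_eq_sub_of_hasDerivAt
        (f := fun s => auxφ G D α (u s)) (fun t ht => ?_) (hgInt x y h1 h2 h3)
      rw [Set.uIcc_of_le h2] at ht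
      have h4 := (hφd (u t) (huI t (hIccsub ht))).comp t (hu t (hIccsub ht))
      exact h4
    rw [← hftc]
    calc |∫ t in x..y, auxF G D (u t) * u' t| ≤ ∫ t in x..y, |auxF G D (u t) * u' t| :=
          intervalIntegral.abs_integral_le_integral_abs h2
      _ ≤ ∫ t in x..y, e t := by
          refine intervalIntegral.integral_mono_on h2 ((hgInt x y h1 h2 h3).abs) (heInt x y h1 h2 h3)
            (fun t ht => ?_)
          have htab := hIccsub ht
          have hGt : 0 ≤ G (u t) := hG0 _ (huI t htab)
          have hDt : 0 < D (u t) := hd.trans_le (hDd _ (huI t htab))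
          show |auxF G D (u t) * u' t| ≤ ε / 2 * (D (u t) * u' t) ^ 2 + G (u t) / ε
          have h6 : Real.sqrt (2 * G (u t)) ^ 2 = 2 * G (u t) := Real.sq_sqrt (by linarith)
          have hq : |auxF G D (u t) * u' t| = Real.sqrt (2 * G (u t)) * |D (u t) * u' t| := by
            unfold auxF
            rw [abs_mul, abs_mul, abs_of_nonneg (Real.sqrt_nonneg _), abs_of_pos hDt, abs_mul,
              abs_of_pos hDt, mul_assoc]
          have hq2 : (D (u t) * u' t)^2 = |D (u t) * u' t|^2 := (sq_abs _).symm
          rw [hq, hq2]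
          set q := |D (u t) * u' t| with hqdef
          have h8 : 0 ≤ q := abs_nonneg _
          have hmain : 2*ε*(Real.sqrt (2*G (u t)) * q) ≤ 2*ε*(ε/2*q^2 + G (u t)/ε) := by
            have hexp : 2*ε*(ε/2*q^2 + G (u t)/ε) = ε^2*q^2 + 2*G (u t) := by
              field_simp
            rw [hexp]
            have h9 := sq_nonneg (ε * q - Real.sqrt (2*G (u t)))
            have h10 : (ε * q - Real.sqrt (2*G (u t)))^2
                = ε^2*q^2 + (Real.sqrt (2*G (u t)))^2 - 2*ε*(Real.sqrt (2*G (u t)) * q) := by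
              ring
            linarith [h9, h10, h6]
          have := le_of_mul_le_mul_left (by linarith : 2*ε*(Real.sqrt (2*G (u t)) * q) ≤ 2*ε*(ε/2*q^2 + G (u t)/ε)) (by linarith : (0:ℝ) < 2*ε)
          linarith
  have heglobal : IntervalIntegrable e volume a b := heInt a b le_rfl hab.le le_rfl
  have hhab : ∀ i : Fin N, h i ∈ Set.Icc a b := fun i => ⟨by linarith [hha i], by linarith [hhb i]⟩
  set pts : ℕ → ℝ := fun k => if k = 0 then a else if hk : k ≤ N then h ⟨k-1, by omega⟩ else b
    with hpts
  have hpts0 : pts 0 = a := by simp [hpts]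
  have hptslast : pts (N+1) = b := by
    simp only [hpts]
    rw [if_neg (by omega), dif_neg (by omega)]
  have hptsmem : ∀ k, k ≤ N+1 → pts k ∈ Set.Icc a b := by
    intro k hk
    simp only [hpts]
    split
    · exact ⟨le_rfl, hab.le⟩
    split
    · exact hhab _
    · exact ⟨hab.le, le_rfl⟩
  have hptslt : ∀ k, k ≤ N → pts k < pts (k+1) := by
    intro k hk
    rcases Nat.eq_zero_or_pos k with rfl | hkpos
    · have e1 : pts 1 = h ⟨0, by omega⟩ := by
        simp only [hpts]
        rw [if_neg (by omega), dif_pos (by omega : 1 ≤ N)]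
      show pts 0 < pts 1
      rw [hpts0, e1]
      linarith [hha ⟨0, by omega⟩, hr]
    · simp only [hpts]
      rw [if_neg (by omega), dif_pos hk, if_neg (by omega)]
      by_cases hk2 : k+1 ≤ N
      · rw [dif_pos hk2]
        apply hmono
        rw [Fin.lt_def]
        simp only
        omega
      · rw [dif_neg hk2]
        have := hhb ⟨k-1, by omega⟩
        linarith [hr]
  have hptssep : ∀ k, k ≤ N → ∀ j : Fin N, h j ≤ pts k ∨ pts (k+1) ≤ h j := by
    intro k hk j
    rcases Nat.eq_zero_or_pos k with rfl | hkpos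
    · right
      simp only [hpts]
      rw [if_neg (by omega), dif_pos (by omega : 1 ≤ N)]
      apply hmono.monotone
      rw [Fin.le_def]
      simp only
      omega
    · by_cases hjk : (j : ℕ) ≤ k - 1
      · left
        simp only [hpts]
        rw [if_neg (by omega), dif_pos hk]
        apply hmono.monotone
        rw [Fin.le_def]
        simp only
        omega
      · right
        simp only [hpts]
        rw [if_neg (by omega)]
        by_cases hk2 : k+1 ≤ N
        · rw [dif_pos hk2]
          apply hmono.monotone
          rw [Fin.le_def]
          simp only
          omega
        · exfalso
          have := j.isLt
          omega
  have hseg : ∀ k, k ≤ N → IntervalIntegrable (fun x => |u x - v x|) volume (pts k) (pts (k+1)) := by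
    intro k hk
    have hlt := hptslt k hk
    have hm1 := hptsmem k (by omega)
    have hm2 := hptsmem (k+1) (by omega)
    have hccab : Set.Icc (pts k) (pts (k+1)) ⊆ Set.Icc a b := Set.Icc_subset_Icc hm1.1 hm2.2
    set mp := (pts k + pts (k+1))/2 with hmp
    have hmpmem : mp ∈ Set.Ioo (pts k) (pts (k+1)) := ⟨by rw [hmp]; linarith, by rw [hmp]; linarith⟩
    have hvm : ∀ x ∈ Set.Ioo (pts k) (pts (k+1)), v x = v mp := by
      intro x hx
      have hxab := hccab ⟨hx.1.le, hx.2.le⟩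
      have hmpab := hccab ⟨hmpmem.1.le, hmpmem.2.le⟩
      rcases le_total x mp with hxm | hxm
      · refine hvconst x hxab mp hmpab hxm (fun j hj => ?_)
        rcases hptssep k hk j with hs | hs
        · linarith [hj.1, hx.1]
        · linarith [hj.2, hmpmem.2]
      · exact (hvconst mp hmpab x hxab hxm (fun j hj => by
          rcases hptssep k hk j with hs | hs
          · linarith [hj.1, hmpmem.1]
          · linarith [hj.2, hx.2])).symm
    rw [intervalIntegrable_iff_integrableOn_Ioc_of_le hlt.le,
      integrableOn_Ioc_iff_integrableOn_Ioo]
    have hcont : IntegrableOn (fun x => |u x - v mp|) (Set.Ioo (pts k) (pts (k+1))) volume :=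
      (((hucont.mono hccab).sub continuousOn_const).abs.integrableOn_Icc).mono_set
        Set.Ioo_subset_Icc_self
    refine hcont.congr ((ae_restrict_iff' measurableSet_Ioo).2
      (Filter.Eventually.of_forall fun x hx => ?_))
    show |u x - v mp| = |u x - v x|
    rw [hvm x hx]
  have hvInt : IntervalIntegrable (fun x => |u x - v x|) volume a b := by
    have hch : ∀ k, k ≤ N+1 → IntervalIntegrable (fun x => |u x - v x|) volume a (pts k) := by
      intro k hk
      induction k with
      | zero =>
        rw [hpts0]
      | succ k ih => exact (ih (by omega)).trans (hseg k (by omega))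
    have := hch (N+1) le_rfl
    rwa [hptslast] at this
  have hsampleP : ∀ i : Fin N, ∃ pp ∈ Set.Icc (h i - 3*δ₁/8) (h i - δ₁/4),
      |u pp - v (h i - r)| ≤ σ := by
    intro i
    have hirab : h i - r ∈ Set.Icc a b := ⟨hha i, by linarith [hhb i]⟩
    refine aux_sample (by linarith) (by linarith [hha i]) (by linarith [hhb i]) hucont ?_
      hσpos ?_ hvInt hL1
    · intro x hx
      refine (hvconst (h i - r) hirab x ⟨by linarith [hha i, hx.1], by linarith [hhb i, hx.2]⟩
        (by linarith [hx.1]) (fun j => ?_)).symm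
      rintro ⟨hj1, hj2⟩
      rcases lt_trichotomy j i with hji | hji | hji
      · have := hsep j i hji
        linarith
      · rw [hji] at hj2
        linarith [hx.2]
      · have := hsep i j hji
        linarith [hx.2]
    · have heq : (h i - δ₁/4) - (h i - 3*δ₁/8) = δ₁/8 := by ring
      rw [heq]
  have hsampleQ : ∀ i : Fin N, ∃ qq ∈ Set.Icc (h i + δ₁/4) (h i + 3*δ₁/8),
      |u qq - v (h i + r)| ≤ σ := by
    intro i
    have hirab : h i + r ∈ Set.Icc a b := ⟨by linarith [hha i], hhb i⟩
    refine aux_sample (by linarith) (by linarith [hha i]) (by linarith [hhb i]) hucont ?_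
      hσpos ?_ hvInt hL1
    · intro x hx
      refine hvconst x ⟨by linarith [hha i, hx.1], by linarith [hhb i, hx.2]⟩ (h i + r) hirab
        (by linarith [hx.2]) (fun j => ?_)
      rintro ⟨hj1, hj2⟩
      rcases lt_trichotomy j i with hji | hji | hji
      · have := hsep j i hji
        linarith [hx.1]
      · rw [hji] at hj1
        linarith [hx.1]
      · have := hsep i j hji
        linarith
    · have heq : (h i + 3*δ₁/8) - (h i + δ₁/4) = δ₁/8 := by ring
      rw [heq]
  choose p hp hpσ using hsampleP
  choose q hq hqσ using hsampleQ
  have hclcr : ∀ i : Fin N,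
      (auxφ G D α (v (h i - r)) = 0 ∧ auxφ G D α (v (h i + r)) = γ₀) ∨
      (auxφ G D α (v (h i - r)) = γ₀ ∧ auxφ G D α (v (h i + r)) = 0) := by
    intro i
    have h1 := hvval (h i - r) ⟨hha i, by linarith [hhb i]⟩
    have h2 := hvval (h i + r) ⟨by linarith [hha i], hhb i⟩
    rcases h1 with h1 | h1 <;> rcases h2 with h2 | h2
    · exact absurd (h1.trans h2.symm) (hvjump i)
    · left; rw [h1, h2, hφα, hφβ]; exact ⟨rfl, rfl⟩
    · right; rw [h1, h2, hφα, hφβ]; exact ⟨rfl, rfl⟩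
    · exact absurd (h1.trans h2.symm) (hvjump i)
  have hψp : ∀ i : Fin N, |auxφ G D α (u (p i)) - auxφ G D α (v (h i - r))| ≤ η := fun i =>
    hφnear _ _ (hvval (h i - r) ⟨hha i, by linarith [hhb i]⟩) (hpσ i)
  have hψq : ∀ i : Fin N, |auxφ G D α (u (q i)) - auxφ G D α (v (h i + r))| ≤ η := fun i =>
    hφnear _ _ (hvval (h i + r) ⟨by linarith [hha i], hhb i⟩) (hqσ i)
  have pairL : ∀ i : Fin N, γ₀ - 2*η ≤ |auxφ G D α (u (q i)) - auxφ G D α (u (p i))| := by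
    intro i
    have t1 := abs_sub_le (auxφ G D α (v (h i + r))) (auxφ G D α (u (q i))) (auxφ G D α (v (h i - r)))
    have t2 := abs_sub_le (auxφ G D α (u (q i))) (auxφ G D α (u (p i))) (auxφ G D α (v (h i - r)))
    have t3 : |auxφ G D α (v (h i + r)) - auxφ G D α (u (q i))|
        = |auxφ G D α (u (q i)) - auxφ G D α (v (h i + r))| := abs_sub_comm _ _
    have t4 : |auxφ G D α (v (h i + r)) - auxφ G D α (v (h i - r))| = γ₀ := by
      rcases hclcr i with ⟨e1, e2⟩ | ⟨e1, e2⟩ <;> rw [e1, e2] <;>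
        simp [abs_of_pos hγpos, abs_of_nonneg hγpos.le]
    linarith [hψp i, hψq i]
  have hpmem : ∀ i : Fin N, p i ∈ Set.Icc a b := fun i =>
    ⟨by linarith [(hp i).1, hha i, hδ₁], by linarith [(hp i).2, hhb i, hδ₁, hr]⟩
  have hqmem : ∀ i : Fin N, q i ∈ Set.Icc a b := fun i =>
    ⟨by linarith [(hq i).1, hha i, hδ₁, hr], by linarith [(hq i).2, hhb i, hδ₁]⟩
  have key : ∀ z ∈ Set.Icc a b, u z ∈ K → ∃ i : Fin N,
      p i ≤ z ∧ z ≤ q i ∧ η < auxφ G D α (u z) ∧ auxφ G D α (u z) < γ₀ - η := by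
    intro z hz hzK
    have hWz := hμ (u z) ⟨hzK, huJ z hz⟩
    have hc1 : μ ≤ |auxφ G D α (u z)| := le_trans hWz (min_le_left _ _)
    have hc2 : μ ≤ |auxφ G D α (u z) - γ₀| := le_trans hWz (min_le_right _ _)
    set bse : ℕ → ℝ := fun j => if hj : j < 2*N then
      (if j % 2 = 0 then p ⟨j/2, by omega⟩ else q ⟨j/2, by omega⟩) else b with hbse
    have hbp : ∀ (i : ℕ) (hi : i < N), bse (2*i) = p ⟨i, hi⟩ := by
      intro i hi
      simp only [hbse]
      rw [dif_pos (by omega : 2*i < 2*N), if_pos (by omega : (2*i) % 2 = 0)]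
      congr 1
      exact Fin.ext (show 2*i/2 = i by omega)
    have hbq : ∀ (i : ℕ) (hi : i < N), bse (2*i+1) = q ⟨i, hi⟩ := by
      intro i hi
      simp only [hbse]
      rw [dif_pos (by omega : 2*i+1 < 2*N), if_neg (by omega : ¬((2*i+1) % 2 = 0))]
      congr 1
      exact Fin.ext (show (2*i+1)/2 = i by omega)
    have hbmem : ∀ j, j < 2*N → bse j ∈ Set.Icc a b := by
      intro j hj
      simp only [hbse]
      rw [dif_pos hj]
      split
      · exact hpmem _
      · exact hqmem _
    have hbnear : ∀ j, j < 2*N →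
        ∃ cc, (cc = 0 ∨ cc = γ₀) ∧ |auxφ G D α (u (bse j)) - cc| ≤ η := by
      intro j hj
      rcases Nat.mod_two_eq_zero_or_one j with hpar | hpar
      · have hje : j = 2*(j/2) := by omega
        refine ⟨auxφ G D α (v (h ⟨j/2, by omega⟩ - r)), ?_, ?_⟩
        · rcases hclcr ⟨j/2, by omega⟩ with ⟨e1, _⟩ | ⟨e1, _⟩
          · exact Or.inl e1
          · exact Or.inr e1
        · have e3 : bse j = p ⟨j/2, by omega⟩ := by
            conv_lhs => rw [hje]
            exact hbp (j/2) (by omega)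
          rw [e3]
          exact hψp _
      · have hje : j = 2*(j/2)+1 := by omega
        refine ⟨auxφ G D α (v (h ⟨j/2, by omega⟩ + r)), ?_, ?_⟩
        · rcases hclcr ⟨j/2, by omega⟩ with ⟨_, e2⟩ | ⟨_, e2⟩
          · exact Or.inr e2
          · exact Or.inl e2
        · have e3 : bse j = q ⟨j/2, by omega⟩ := by
            conv_lhs => rw [hje]
            exact hbq (j/2) (by omega)
          rw [e3]
          exact hψq _
    have hbmono : ∀ j, j + 1 < 2*N → bse j < bse (j+1) := by
      intro j hj
      rcases Nat.mod_two_eq_zero_or_one j with hpar | hpar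
      · have hje : j = 2*(j/2) := by omega
        have e3 : bse j = p ⟨j/2, by omega⟩ := by
          conv_lhs => rw [hje]
          exact hbp (j/2) (by omega)
        have e4 : bse (j+1) = q ⟨j/2, by omega⟩ := by
          conv_lhs => rw [show j + 1 = 2*(j/2) + 1 from by omega]
          exact hbq (j/2) (by omega)
        rw [e3, e4]
        have h1 := (hp ⟨j/2, by omega⟩).2
        have h2 := (hq ⟨j/2, by omega⟩).1
        linarith
      · have hje : j = 2*(j/2) + 1 := by omega
        have e3 : bse j = q ⟨j/2, by omega⟩ := by
          conv_lhs => rw [hje]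
          exact hbq (j/2) (by omega)
        have e4 : bse (j+1) = p ⟨j/2+1, by omega⟩ := by
          conv_lhs => rw [show j + 1 = 2*(j/2+1) from by omega]
          exact hbp (j/2+1) (by omega)
        rw [e3, e4]
        have hss := hsep ⟨j/2, by omega⟩ ⟨j/2+1, by omega⟩ (by rw [Fin.lt_def]; simp)
        have h1 := (hq ⟨j/2, by omega⟩).2
        have h2 := (hp ⟨j/2+1, by omega⟩).1
        linarith
    have hPex : ∃ m : ℕ, 2*N ≤ m ∨ z ≤ bse m := ⟨2*N, Or.inl le_rfl⟩
    set ρ := Nat.find hPex with hρdef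
    have hρle : ρ ≤ 2*N := Nat.find_le (Or.inl le_rfl)
    have hlt : ∀ j, j < ρ → bse j < z := by
      intro j hj
      have h1 := Nat.find_min hPex hj
      push_neg at h1
      exact h1.2
    have hbmono' : ∀ i j, i ≤ j → j ≤ 2*N - 1 → bse i ≤ bse j := by
      intro i j hij hj
      exact chain_mono (t := bse) (m := 2*N-1) (fun k hk => (hbmono k (by omega)).le) i j hij hj
    have hge : ∀ j, ρ ≤ j → j < 2*N → z ≤ bse j := by
      intro j hj hj2
      have h1 : z ≤ bse ρ := by
        rcases Nat.find_spec hPex with h1 | h1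
        · exact absurd h1 (by omega)
        · exact h1
      exact h1.trans (hbmono' ρ j hj (by omega))
    set tL : ℕ → ℝ := fun j => if j < ρ then bse j else z with htL
    set tR : ℕ → ℝ := fun j => if j = 0 then z else bse (ρ + j - 1) with htR
    have htL0 : a ≤ tL 0 := by
      simp only [htL]
      split
      · exact (hbmem 0 (by omega)).1
      · exact hz.1
    have htLρ : tL ρ = z := by simp [htL]
    have htLmono : ∀ j, j < ρ → tL j ≤ tL (j+1) := by
      intro j hj
      have e1 : tL j = bse j := by simp [htL, hj]
      rw [e1]
      by_cases h2 : j + 1 < ρ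
      · rw [show tL (j+1) = bse (j+1) from by simp [htL, h2]]
        exact (hbmono j (by omega)).le
      · rw [show tL (j+1) = z from by simp [htL, h2]]
        exact (hlt j hj).le
    have hSL : (∑ j ∈ Finset.range ρ, |auxφ G D α (u (tL (j+1))) - auxφ G D α (u (tL j))|)
        ≤ ∫ s in a..z, e s :=
      aux_chain e (fun x => auxφ G D α (u x)) hab.le heglobal he0 hE ρ tL a z le_rfl hz.2
        htL0 (le_of_eq htLρ) htLmono
    have htR0 : tR 0 = z := by simp [htR]
    have htRlast : tR (2*N - ρ) ≤ b := by
      rcases Nat.eq_zero_or_pos (2*N - ρ) with h0 | h0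
      · rw [h0, htR0]; exact hz.2
      · have hne : 2*N - ρ ≠ 0 := by omega
        rw [show tR (2*N-ρ) = bse (ρ + (2*N - ρ) - 1) from by simp [htR, hne]]
        rw [show ρ + (2*N - ρ) - 1 = 2*N - 1 from by omega]
        exact (hbmem _ (by omega)).2
    have htRmono : ∀ j, j < 2*N - ρ → tR j ≤ tR (j+1) := by
      intro j hj
      rcases Nat.eq_zero_or_pos j with rfl | hjpos
      · rw [htR0, show tR 1 = bse (ρ + 1 - 1) from by simp [htR],
          show ρ + 1 - 1 = ρ from by omega]
        exact hge ρ le_rfl (by omega)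
      · have hne : j ≠ 0 := by omega
        have e1 : tR j = bse (ρ + j - 1) := by simp [htR, hne]
        have e2 : tR (j+1) = bse (ρ + (j+1) - 1) := by simp [htR]
        rw [e1, e2, show ρ + (j+1) - 1 = (ρ + j - 1) + 1 from by omega]
        exact (hbmono (ρ + j - 1) (by omega)).le
    have hSR : (∑ j ∈ Finset.range (2*N - ρ),
        |auxφ G D α (u (tR (j+1))) - auxφ G D α (u (tR j))|) ≤ ∫ s in z..b, e s :=
      aux_chain e (fun x => auxφ G D α (u x)) hab.le heglobal he0 hE (2*N-ρ) tR z b hz.1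
        le_rfl (le_of_eq htR0.symm) htRlast htRmono
    have hEtot : (∫ s in a..z, e s) + (∫ s in z..b, e s) ≤ n * γ₀ + μ/4 := by
      rw [intervalIntegral.integral_add_adjacent_intervals (heInt a z le_rfl hz.1 hz.2)
        (heInt z b hz.1 hz.2 le_rfl)]
      exact hEn
    have hextraL : ∀ j, j < 2*N → μ - η ≤ |auxφ G D α (u z) - auxφ G D α (u (bse j))| := by
      intro j hj
      obtain ⟨cc, hcc, hnear⟩ := hbnear j hj
      exact combo_single hnear hcc hc1 hc2
    have hextraR : ∀ j, j < 2*N → μ - η ≤ |auxφ G D α (u (bse j)) - auxφ G D α (u z)| := by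
      intro j hj
      rw [abs_sub_comm]
      exact hextraL j hj
    have pairB : ∀ (i : ℕ) (hi : i < N),
        γ₀ - 2*η ≤ |auxφ G D α (u (bse (2*i+1))) - auxφ G D α (u (bse (2*i)))| := by
      intro i hi
      rw [hbp i hi, hbq i hi]
      exact pairL _
    have hηeq2 : 4*(n*η) + 4*η = μ := by linear_combination hηeq
    have hnη : η ≤ n*η := le_mul_of_one_le_left hηpos.le hn1
    rcases Nat.mod_two_eq_zero_or_one ρ with hpar | hpar
    · exfalso
      have hLbound : ((ρ/2 : ℕ) : ℝ) * (γ₀ - 2*η) + (if 0 < ρ then μ - η else 0)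
          ≤ ∑ j ∈ Finset.range ρ, |auxφ G D α (u (tL (j+1))) - auxφ G D α (u (tL j))| := by
        rcases Nat.eq_zero_or_pos ρ with h0 | h0
        · rw [h0]
          simp
        · rw [if_pos h0]
          refine sum_extract _ (fun j => abs_nonneg _) (ρ/2) ρ _ _ (by omega) h0 ?_ ?_
          · intro i hi
            have e1 : tL (2*i) = bse (2*i) := by simp [htL, show 2*i < ρ from by omega]
            have e2 : tL (2*i+1) = bse (2*i+1) := by simp [htL, show 2*i+1 < ρ from by omega]
            rw [e1, e2]
            exact pairB i (by omega)
          · have e2 : tL (ρ-1) = bse (ρ-1) := by simp [htL, show ρ-1 < ρ from by omega]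
            rw [show ρ-1+1 = ρ from by omega, htLρ, e2]
            exact hextraL (ρ-1) (by omega)
      have hRbound : ((N - ρ/2 : ℕ) : ℝ) * (γ₀ - 2*η) + (if ρ < 2*N then μ - η else 0)
          ≤ ∑ j ∈ Finset.range (2*N - ρ),
            |auxφ G D α (u (tR (j+1))) - auxφ G D α (u (tR j))| := by
        rcases Nat.lt_or_ge ρ (2*N) with hlt2 | hge2
        · rw [if_pos hlt2]
          refine sum_extract' _ (fun j => abs_nonneg _) (ρ/2) N ρ _ _ (Or.inl (by omega)) hlt2
            (by omega) ?_ ?_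
          · intro i hi1 hi2
            have hne : 2*i+1-ρ ≠ 0 := by omega
            have e1 : tR (2*i+1-ρ) = bse (2*i) := by
              rw [show tR (2*i+1-ρ) = bse (ρ + (2*i+1-ρ) - 1) from by simp [htR, hne]]
              congr 1
              omega
            have e2 : tR (2*i+1-ρ+1) = bse (2*i+1) := by
              rw [show tR (2*i+1-ρ+1) = bse (ρ + (2*i+1-ρ+1) - 1) from by simp [htR]]
              congr 1
              omega
            rw [e1, e2]
            exact pairB i hi2
          · have e1 : tR 1 = bse ρ := by
              have e0 : ρ + 1 - 1 = ρ := by omega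
              rw [show tR 1 = bse (ρ + 1 - 1) from by simp [htR], e0]
            rw [e1, htR0]
            exact hextraR ρ hlt2
        · rw [if_neg (by omega), show 2*N - ρ = 0 from by omega,
            show N - ρ/2 = 0 from by omega]
          simp
      set A := ((ρ/2 : ℕ) : ℝ) with hA
      set B := ((N - ρ/2 : ℕ) : ℝ) with hB
      have hcast : A + B = n := by
        rw [hA, hB, ← Nat.cast_add, show ρ/2 + (N - ρ/2) = N from by omega, hn]
      have hAB : A * (γ₀ - 2*η) + B * (γ₀ - 2*η) = n*γ₀ - 2*(n*η) := by
        rw [← add_mul, hcast]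
        ring
      have hextrasum : μ - η ≤ (if 0 < ρ then μ - η else 0) + (if ρ < 2*N then μ - η else 0) := by
        rcases Nat.eq_zero_or_pos ρ with h0 | h0
        · rw [if_neg (by omega), if_pos (by omega)]
          simp
        · rcases Nat.lt_or_ge ρ (2*N) with h2 | h2
          · rw [if_pos h0, if_pos h2]
            linarith
          · rw [if_pos h0, if_neg (by omega)]
            simp
      have step1 : n*γ₀ - 2*(n*η) + (μ - η) ≤ n * γ₀ + μ/4 := by
        linarith [hSL, hSR, hEtot, hLbound, hRbound, hAB, hextrasum]
      linarith [step1, hηeq2, hnη, hηpos]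
    · have hsltN : ρ/2 < N := by omega
      have hbseρ : bse ρ = q ⟨ρ/2, hsltN⟩ := by
        have e1 := hbq (ρ/2) hsltN
        rw [show 2*(ρ/2)+1 = ρ from by omega] at e1
        exact e1
      have hbseρ1 : bse (ρ-1) = p ⟨ρ/2, hsltN⟩ := by
        have e1 := hbp (ρ/2) hsltN
        rw [show 2*(ρ/2) = ρ-1 from by omega] at e1
        exact e1
      by_cases hcrange : η < auxφ G D α (u z) ∧ auxφ G D α (u z) < γ₀ - η
      · refine ⟨⟨ρ/2, hsltN⟩, ?_, ?_, hcrange.1, hcrange.2⟩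
        · rw [← hbseρ1]
          exact (hlt (ρ-1) (by omega)).le
        · rw [← hbseρ]
          exact hge ρ le_rfl (by omega)
      · exfalso
        have hout : auxφ G D α (u z) ≤ η ∨ γ₀ - η ≤ auxφ G D α (u z) := by
          rcases le_or_gt (auxφ G D α (u z)) η with h1 | h1
          · exact Or.inl h1
          · right
            by_contra h2
            push_neg at h2
            exact hcrange ⟨h1, h2⟩
        have hLR : (|auxφ G D α (u (p ⟨ρ/2, hsltN⟩))| ≤ η ∧
              |auxφ G D α (u (q ⟨ρ/2, hsltN⟩)) - γ₀| ≤ η) ∨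
            (|auxφ G D α (u (p ⟨ρ/2, hsltN⟩)) - γ₀| ≤ η ∧
              |auxφ G D α (u (q ⟨ρ/2, hsltN⟩))| ≤ η) := by
          rcases hclcr ⟨ρ/2, hsltN⟩ with ⟨e1, e2⟩ | ⟨e1, e2⟩
          · left
            constructor
            · have h5 := hψp ⟨ρ/2, hsltN⟩
              rw [e1] at h5
              simpa using h5
            · have h5 := hψq ⟨ρ/2, hsltN⟩
              rw [e2] at h5
              exact h5
          · right
            constructor
            · have h5 := hψp ⟨ρ/2, hsltN⟩
              rw [e1] at h5
              exact h5
            · have h5 := hψq ⟨ρ/2, hsltN⟩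
              rw [e2] at h5
              simpa using h5
        have hcombo := combo_pair hηpos hημ hLR hc1 hc2 hout
        have hLbound : ((ρ/2 : ℕ) : ℝ) * (γ₀ - 2*η)
            + |auxφ G D α (u z) - auxφ G D α (u (p ⟨ρ/2, hsltN⟩))|
            ≤ ∑ j ∈ Finset.range ρ, |auxφ G D α (u (tL (j+1))) - auxφ G D α (u (tL j))| := by
          refine sum_extract _ (fun j => abs_nonneg _) (ρ/2) ρ _ _ (by omega) (by omega) ?_ ?_
          · intro i hi
            have e1 : tL (2*i) = bse (2*i) := by simp [htL, show 2*i < ρ from by omega]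
            have e2 : tL (2*i+1) = bse (2*i+1) := by simp [htL, show 2*i+1 < ρ from by omega]
            rw [e1, e2]
            exact pairB i (by omega)
          · have e2 : tL (ρ-1) = bse (ρ-1) := by simp [htL, show ρ-1 < ρ from by omega]
            rw [show ρ-1+1 = ρ from by omega, htLρ, e2, hbseρ1]
        have hRbound : ((N - (ρ/2+1) : ℕ) : ℝ) * (γ₀ - 2*η)
            + |auxφ G D α (u (q ⟨ρ/2, hsltN⟩)) - auxφ G D α (u z)|
            ≤ ∑ j ∈ Finset.range (2*N - ρ),
              |auxφ G D α (u (tR (j+1))) - auxφ G D α (u (tR j))| := by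
          refine sum_extract' _ (fun j => abs_nonneg _) (ρ/2+1) N ρ _ _ (Or.inr (by omega))
            (by omega) (by omega) ?_ ?_
          · intro i hi1 hi2
            have hne : 2*i+1-ρ ≠ 0 := by omega
            have e1 : tR (2*i+1-ρ) = bse (2*i) := by
              rw [show tR (2*i+1-ρ) = bse (ρ + (2*i+1-ρ) - 1) from by simp [htR, hne]]
              congr 1
              omega
            have e2 : tR (2*i+1-ρ+1) = bse (2*i+1) := by
              rw [show tR (2*i+1-ρ+1) = bse (ρ + (2*i+1-ρ+1) - 1) from by simp [htR]]
              congr 1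
              omega
            rw [e1, e2]
            exact pairB i hi2
          · have e1 : tR 1 = bse ρ := by
              have e0 : ρ + 1 - 1 = ρ := by omega
              rw [show tR 1 = bse (ρ + 1 - 1) from by simp [htR], e0]
            rw [e1, htR0, hbseρ]
        set A := ((ρ/2 : ℕ) : ℝ) with hA
        set B := ((N - (ρ/2+1) : ℕ) : ℝ) with hB
        have hcast : A + B = n - 1 := by
          rw [hA, hB, ← Nat.cast_add, show ρ/2 + (N - (ρ/2+1)) = N - 1 from by omega,
            Nat.cast_sub hNpos, hn]
          simp
        have hAB : A * (γ₀ - 2*η) + B * (γ₀ - 2*η) = (n-1)*γ₀ - 2*(n*η) + 2*η - γ₀ + γ₀ := by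
          rw [← add_mul, hcast]
          ring
        have step1 : (n-1)*γ₀ - 2*(n*η) + 2*η - γ₀ + γ₀ + (γ₀ - 2*η + 2*(μ - η))
            ≤ n*γ₀ + μ/4 := by
          linarith [hSL, hSR, hEtot, hLbound, hRbound, hAB, hcombo]
        linarith [step1, hηeq2, hnη, hηpos]
  rcases Set.eq_empty_or_nonempty (Set.Icc a b ∩ u ⁻¹' K) with hS | hS
  · rw [hS, Metric.hausdorffDist_empty']
    linarith
  obtain ⟨z₀, hz₀⟩ := hS
  obtain ⟨i₀, hpz₀, hqz₀, hcz1, hcz2⟩ := key z₀ hz₀.1 hz₀.2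
  have hik : u z₀ ∈ K := hz₀.2
  have hhd : Metric.hausdorffDist (Set.Icc a b ∩ u ⁻¹' K) (Set.range h) ≤ 3*δ₁/8 := by
    apply Metric.hausdorffDist_le_of_mem_dist (by positivity)
    · intro x hx
      obtain ⟨i, hpi, hqi, _, _⟩ := key x hx.1 hx.2
      refine ⟨h i, Set.mem_range_self i, ?_⟩
      rw [Real.dist_eq, abs_le]
      constructor
      · linarith [(hp i).1]
      · linarith [(hq i).2]
    · rintro y ⟨i, rfl⟩
      have hpq : p i < q i := by linarith [(hp i).2, (hq i).1]
      have hpqsub : Set.Icc (p i) (q i) ⊆ Set.Icc a b :=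
        Set.Icc_subset_Icc (hpmem i).1 (hqmem i).2
      have hcont : ContinuousOn (fun x => auxφ G D α (u x)) (Set.uIcc (p i) (q i)) := by
        rw [Set.uIcc_of_le hpq.le]
        intro x hx
        exact ((hφd (u x) (huI x (hpqsub hx))).continuousAt.comp
          (hu x (hpqsub hx)).continuousAt).continuousWithinAt
      have hmem : auxφ G D α (u z₀) ∈
          Set.uIcc (auxφ G D α (u (p i))) (auxφ G D α (u (q i))) := by
        rcases hclcr i with ⟨e1, e2⟩ | ⟨e1, e2⟩
        · have h5 := hψp i
          rw [e1] at h5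
          have h6 := hψq i
          rw [e2] at h6
          rw [abs_le] at h5 h6
          rw [Set.mem_uIcc]
          left
          constructor
          · linarith [h5.2]
          · linarith [h6.1]
        · have h5 := hψp i
          rw [e1] at h5
          have h6 := hψq i
          rw [e2] at h6
          rw [abs_le] at h5 h6
          rw [Set.mem_uIcc]
          right
          constructor
          · linarith [h6.2]
          · linarith [h5.1]
      obtain ⟨t, htmem, htval⟩ := intermediate_value_uIcc hcont hmem
      rw [Set.uIcc_of_le hpq.le] at htmem
      have htab : t ∈ Set.Icc a b := hpqsub htmem
      have hteq : u t = u z₀ := hφinj (huJ t htab) (huJ z₀ hz₀.1) htval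
      refine ⟨t, ⟨htab, by rw [Set.mem_preimage, hteq]; exact hik⟩, ?_⟩
      rw [Real.dist_eq, abs_le]
      constructor
      · linarith [(hq i).2, htmem.2]
      · linarith [(hp i).1, htmem.1]
  linarith [hhd]
end
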